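/- arXiv:1002.2698 — 8 statements merged into one kernel-verified Lean document; each statement's English description precedes it below -/
import Mathlib

section
/- Let F be a field (e.g. ℂ), let g₁, g₂, g₃ be nonzero elements of F, and let m₁, m₂, m₃, n₁, n₂, n₃ be integers. Set D₁ = m₂n₃ − m₃n₂, D₂ = m₃n₁ − m₁n₃, D₃ = m₁n₂ − m₂n₁ and K = n₁n₂m₃ + n₂n₃m₁ + n₃n₁m₂ − m₁m₂n₃ − m₂m₃n₁ − m₃m₁n₂. Then (−1)^K · g₁^{D₁} · g₂^{D₂} · g₃^{D₃} = [(−1)^{n₁n₃m₂ − m₁m₃n₂}(g₁^{n₃}/g₃^{n₁})^{m₂}] · [(−1)^{n₂n₁m₃ − m₂m₁n₃}(g₂^{n₁}/g₁^{n₂})^{m₃}] · [(−1)^{n₃n₂m₁ − m₃m₂n₁}(g₃^{n₂}/g₂^{n₃})^{m₁}] (all powers are integer powers of nonzero field elements). -/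
/-- Theorem 0.2: the Parshin symbol equals the product of the refined Parshin
symbols over the cyclic permutations of the three functions. -/
theorem parshin_eq_prod_cyclic_refined {F : Type*} [Field F]
    (g₁ g₂ g₃ : F) (hg₁ : g₁ ≠ 0) (hg₂ : g₂ ≠ 0) (hg₃ : g₃ ≠ 0)
    (m₁ m₂ m₃ n₁ n₂ n₃ : ℤ) :
    (-1 : F) ^ (n₁*n₂*m₃ + n₂*n₃*m₁ + n₃*n₁*m₂ - m₁*m₂*n₃ - m₂*m₃*n₁ - m₃*m₁*n₂)
      * g₁ ^ (m₂*n₃ - m₃*n₂) * g₂ ^ (m₃*n₁ - m₁*n₃) * g₃ ^ (m₁*n₂ - m₂*n₁)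
    = ((-1 : F) ^ (n₁*n₃*m₂ - m₁*m₃*n₂) * (g₁ ^ n₃ / g₃ ^ n₁) ^ m₂)
      * ((-1 : F) ^ (n₂*n₁*m₃ - m₂*m₁*n₃) * (g₂ ^ n₁ / g₁ ^ n₂) ^ m₃)
      * ((-1 : F) ^ (n₃*n₂*m₁ - m₃*m₂*n₁) * (g₃ ^ n₂ / g₂ ^ n₃) ^ m₁) := by
  have h1 : (-1 : F) ≠ 0 := by norm_num
  simp only [div_zpow, ← zpow_mul, zpow_sub₀ h1, zpow_add₀ h1,
    zpow_sub₀ hg₁, zpow_sub₀ hg₂, zpow_sub₀ hg₃]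
  field_simp
  ring_nf
end

section
/- Let a, b, c be pairwise distinct complex numbers and let i₁,i₂,i₃, j₁,j₂,j₃, k₁,k₂,k₃, l₁,l₂,l₃ be integers satisfying iₙ + jₙ + kₙ = 0 for n = 1,2,3. Then [(−1)^{i₁i₃l₂ − l₁l₃i₂} · ((a−b)/(a−c))^{l₂(i₁k₃ − i₃k₁)}] · [(−1)^{j₁j₃l₂ − l₁l₃j₂} · ((b−c)/(b−a))^{l₂(j₁i₃ − j₃i₁)}] · [(−1)^{k₁k₃l₂ − l₁l₃k₂} · ((c−a)/(c−b))^{l₂(k₁j₃ − k₃j₁)}] = 1, where all powers are integer powers of nonzero complex numbers. -/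
/-- Auxiliary algebra lemma: three factors of the refined Parshin shape. -/
lemma refined_parshin_aux (X Y Z : ℂ) (A B C n : ℤ)
    (hXYZ : X * Y * Z = -1) (hE : Even (A + B + C - n)) :
    (-1 : ℂ) ^ A * X ^ (-n) * ((-1 : ℂ) ^ B * Y ^ (-n))
      * ((-1 : ℂ) ^ C * Z ^ (-n)) = 1 := by
  have hm1 : (-1 : ℂ) ≠ 0 := by norm_num
  have : (-1 : ℂ) ^ A * X ^ (-n) * ((-1 : ℂ) ^ B * Y ^ (-n))
      * ((-1 : ℂ) ^ C * Z ^ (-n))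
      = (-1 : ℂ) ^ (A + B + C) * (X * Y * Z) ^ (-n) := by
    rw [mul_zpow, mul_zpow, zpow_add₀ hm1, zpow_add₀ hm1]; ring
  rw [this, hXYZ, ← zpow_add₀ hm1]
  have : A + B + C + -n = A + B + C - n := by ring
  rw [this, hE.neg_one_zpow]

/-- The example of Section 5.4: the product of the three refined Parshin symbols
at the points (a,0), (b,0), (c,0) equals 1. -/
theorem refined_parshin_example_product_eq_one
    (a b c : ℂ) (hab : a ≠ b) (hac : a ≠ c) (hbc : b ≠ c)
    (i₁ i₂ i₃ j₁ j₂ j₃ k₁ k₂ k₃ l₁ l₂ l₃ : ℤ)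
    (h1 : i₁ + j₁ + k₁ = 0) (h2 : i₂ + j₂ + k₂ = 0) (h3 : i₃ + j₃ + k₃ = 0) :
    ((-1 : ℂ) ^ (i₁*i₃*l₂ - l₁*l₃*i₂) * ((a - b) / (a - c)) ^ (l₂ * (i₁*k₃ - i₃*k₁)))
      * ((-1 : ℂ) ^ (j₁*j₃*l₂ - l₁*l₃*j₂) * ((b - c) / (b - a)) ^ (l₂ * (j₁*i₃ - j₃*i₁)))
      * ((-1 : ℂ) ^ (k₁*k₃*l₂ - l₁*l₃*k₂) * ((c - a) / (c - b)) ^ (l₂ * (k₁*j₃ - k₃*j₁)))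
    = 1 := by
  have hk1 : k₁ = -i₁ - j₁ := by omega
  have hk2 : k₂ = -i₂ - j₂ := by omega
  have hk3 : k₃ = -i₃ - j₃ := by omega
  subst hk1 hk2 hk3
  have hu : a - b ≠ 0 := sub_ne_zero.mpr hab
  have hv : a - c ≠ 0 := sub_ne_zero.mpr hac
  have hw : b - c ≠ 0 := sub_ne_zero.mpr hbc
  have hu' : b - a ≠ 0 := sub_ne_zero.mpr hab.symm
  have hv' : c - a ≠ 0 := sub_ne_zero.mpr hac.symm
  have hw' : c - b ≠ 0 := sub_ne_zero.mpr hbc.symm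
  set n : ℤ := l₂ * (i₁ * j₃ - i₃ * j₁) with hn
  rw [show l₂ * (i₁ * (-i₃ - j₃) - i₃ * (-i₁ - j₁)) = -n by rw [hn]; ring,
      show l₂ * (j₁ * i₃ - j₃ * i₁) = -n by rw [hn]; ring,
      show l₂ * ((-i₁ - j₁) * j₃ - (-i₃ - j₃) * j₁) = -n by rw [hn]; ring]
  apply refined_parshin_aux
  · field_simp
    ring
  · exact ⟨l₂ * (i₁ * i₃ + j₁ * j₃ + i₃ * j₁), by rw [hn]; ring⟩
end

section
/- Let n be a natural number and let f₁, …, f_n : ℝ → ℂ be continuous on [0,2]. Then ∫_{0 ≤ t₁ ≤ ⋯ ≤ t_n ≤ 2} f₁(t₁)⋯f_n(t_n) dt₁⋯dt_n = Σ_{i=0}^{n} (∫_{0 ≤ t₁ ≤ ⋯ ≤ t_i ≤ 1} f₁(t₁)⋯f_i(t_i) dt₁⋯dt_i) · (∫_{1 ≤ t_{i+1} ≤ ⋯ ≤ t_n ≤ 2} f_{i+1}(t_{i+1})⋯f_n(t_n) dt_{i+1}⋯dt_n), where an empty integral (i = 0 or i = n) is interpreted as 1. -/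
open MeasureTheory

/-- Chen's iterated integral of the functions `f 0, …, f (n-1)` (pullbacks of
1-forms along a path) over the simplex `x ≤ t 0 ≤ t 1 ≤ ⋯ ≤ t (n-1) ≤ y`. -/
noncomputable def chenIterated (n : ℕ) (x y : ℝ) (f : Fin n → ℝ → ℂ) : ℂ :=
  ∫ t in {t : Fin n → ℝ | (∀ i, x ≤ t i ∧ t i ≤ y) ∧ ∀ i j : Fin n, i ≤ j → t i ≤ t j},
    ∏ i, f i (t i)

/-!
The simplex `x ≤ t₀ ≤ ⋯ ≤ t_{n-1} ≤ z` is the union, over `p = 0, …, n`, of the pieces where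
`t₀, …, t_{p-1} ∈ [x, y]` and `t_p, …, t_{n-1} ∈ [y, z]`; two pieces meet only inside a
hyperplane `t_i = y`, which is null. Splitting the coordinates into the first `p` and the last
`n - p` identifies a piece with the product of the simplices over `[x, y]` and over `[y, z]`,
so by Fubini its integral is the product of the two iterated integrals.
-/

open Set

def chenSimplex (n : ℕ) (x y : ℝ) : Set (Fin n → ℝ) :=
  (univ.pi fun _ => Icc x y) ∩ {t | Monotone t}

lemma chenIterated_eq_setIntegral (n : ℕ) (x y : ℝ) (f : Fin n → ℝ → ℂ) :
    chenIterated n x y f = ∫ t in chenSimplex n x y, ∏ i, f i (t i) := by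
  rw [chenIterated]
  congr 3
  exact Set.ext fun t =>
    ⟨fun ht => ⟨fun i _ => ht.1 i, fun i j => ht.2 i j⟩,
      fun ht => ⟨fun i => ht.1 i trivial, fun i j => @ht.2 i j⟩⟩

lemma isCompact_chenSimplex (n : ℕ) (x y : ℝ) : IsCompact (chenSimplex n x y) :=
  (isCompact_univ_pi fun _ => isCompact_Icc).inter_right isClosed_monotone

lemma integrableOn_chenSimplex {n : ℕ} {x y : ℝ} {f : Fin n → ℝ → ℂ}
    (hf : ∀ i, ContinuousOn (f i) (Icc x y)) :
    IntegrableOn (fun t => ∏ i, f i (t i)) (chenSimplex n x y) := by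
  refine ContinuousOn.integrableOn_compact (isCompact_chenSimplex n x y) ?_
  refine continuousOn_finsetProd _ fun i _ => (hf i).comp (continuous_apply i).continuousOn ?_
  exact fun t ht => ht.1 i (mem_univ i)

def chenPiece (n p : ℕ) (x y z : ℝ) : Set (Fin n → ℝ) :=
  (univ.pi fun i => if (i : ℕ) < p then Icc x y else Icc y z) ∩ {t | Monotone t}

lemma isClosed_chenPiece (n p : ℕ) (x y z : ℝ) : IsClosed (chenPiece n p x y z) :=
  (isClosed_set_pi fun i _ => by split_ifs <;> exact isClosed_Icc).inter isClosed_monotone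

lemma chenPiece_subset {n p : ℕ} {x y z : ℝ} (hxy : x ≤ y) (hyz : y ≤ z) :
    chenPiece n p x y z ⊆ chenSimplex n x z := by
  refine fun t ht => ⟨fun i _ => ?_, ht.2⟩
  have hti := ht.1 i (mem_univ i)
  dsimp only at hti ⊢
  split_ifs at hti
  · exact Icc_subset_Icc_right hyz hti
  · exact Icc_subset_Icc_left hxy hti

lemma exists_mem_chenPiece {n : ℕ} {x y z : ℝ} {t : Fin n → ℝ}
    (ht : t ∈ chenSimplex n x z) :
    ∃ p : Fin (n + 1), t ∈ chenPiece n p x y z := by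
  have hxz : ∀ i, t i ∈ Icc x z := fun i => ht.1 i (mem_univ i)
  obtain hall | ⟨a, ha⟩ := ((isLowerSet_Iio y).preimage ht.2).eq_univ_or_Iio
  · refine ⟨Fin.last n, fun i _ => ?_, ht.2⟩
    have hi : t i < y := (Set.eq_univ_iff_forall.1 hall i :)
    simp only [Fin.val_last, i.isLt, if_true]
    exact ⟨(hxz i).1, hi.le⟩
  · refine ⟨a.castSucc, fun i _ => ?_, ht.2⟩
    have hi : t i < y ↔ i < a := Set.ext_iff.1 ha i
    simp only [Fin.val_castSucc, ← Fin.lt_def, ← hi]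
    split_ifs with h
    · exact ⟨(hxz i).1, h.le⟩
    · exact ⟨not_lt.1 h, (hxz i).2⟩

lemma chenPiece_inter_subset {n p q : ℕ} {x y z : ℝ} (hpq : p < q) (hq : q ≤ n) :
    chenPiece n p x y z ∩ chenPiece n q x y z ⊆ {t | t ⟨p, hpq.trans_le hq⟩ = y} := by
  rintro t ⟨⟨htp, -⟩, htq, -⟩
  have h1 := htp ⟨p, hpq.trans_le hq⟩ (mem_univ _)
  have h2 := htq ⟨p, hpq.trans_le hq⟩ (mem_univ _)
  simp only [lt_irrefl, if_false, hpq, if_true] at h1 h2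
  exact le_antisymm h2.2 h1.1

lemma pairwise_aedisjoint_chenPiece (n : ℕ) (x y z : ℝ) :
    Pairwise (Function.onFun (AEDisjoint volume) fun p : Fin (n + 1) =>
      chenPiece n p x y z) := by
  refine (Std.Symm.pairwise_on _).2 fun p q hpq => measure_mono_null
    (chenPiece_inter_subset hpq (Nat.lt_succ_iff.1 q.2)) ?_
  exact Measure.pi_hyperplane _ _ _

def MeasurableEquiv.piFinAddProd (k m : ℕ) :
    (Fin (k + m) → ℝ) ≃ᵐ (Fin k → ℝ) × (Fin m → ℝ) :=
  (MeasurableEquiv.piCongrLeft (fun _ => ℝ) finSumFinEquiv).symm.trans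
    (MeasurableEquiv.sumPiEquivProdPi fun _ => ℝ)

lemma MeasurableEquiv.piFinAddProd_apply (k m : ℕ) (t : Fin (k + m) → ℝ) :
    piFinAddProd k m t = (fun a => t (Fin.castAdd m a), fun b => t (Fin.natAdd k b)) :=
  rfl

lemma volume_measurePreserving_piFinAddProd (k m : ℕ) :
    MeasurePreserving (MeasurableEquiv.piFinAddProd k m) :=
  (volume_measurePreserving_sumPiEquivProdPi _).comp
    ((volume_measurePreserving_piCongrLeft (fun _ => ℝ) finSumFinEquiv).symm _)

lemma Fin.monotone_of_castAdd_natAdd {α : Type*} [Preorder α] {k m : ℕ} {t : Fin (k + m) → α}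
    (hleft : Monotone fun a => t (Fin.castAdd m a))
    (hright : Monotone fun b => t (Fin.natAdd k b))
    (hjoin : ∀ a b, t (Fin.castAdd m a) ≤ t (Fin.natAdd k b)) : Monotone t := by
  intro i j hij
  induction i using Fin.addCases with
  | left a =>
    induction j using Fin.addCases with
    | left a' => exact hleft ((Fin.strictMono_castAdd m).le_iff_le.1 hij)
    | right b' => exact hjoin a b'
  | right b =>
    induction j using Fin.addCases with
    | left a' => simp only [Fin.le_def, Fin.val_natAdd, Fin.val_castAdd] at hij; omega
    | right b' => exact hright ((Fin.strictMono_natAdd k).le_iff_le.1 hij)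

lemma chenPiece_add_eq_preimage (k m : ℕ) (x y z : ℝ) :
    chenPiece (k + m) k x y z =
      MeasurableEquiv.piFinAddProd k m ⁻¹' (chenSimplex k x y ×ˢ chenSimplex m y z) := by
  ext t
  simp only [mem_preimage, MeasurableEquiv.piFinAddProd_apply, mem_prod]
  constructor
  · rintro ⟨hIcc, hmono⟩
    refine ⟨⟨fun a _ => ?_, hmono.comp (Fin.strictMono_castAdd m).monotone⟩,
      fun b _ => ?_, hmono.comp (Fin.strictMono_natAdd k).monotone⟩
    · simpa using hIcc (Fin.castAdd m a) (mem_univ _)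
    · simpa using hIcc (Fin.natAdd k b) (mem_univ _)
  · rintro ⟨⟨hu, humono⟩, hv, hvmono⟩
    refine ⟨fun i _ => ?_, Fin.monotone_of_castAdd_natAdd humono hvmono
      fun a b => (hu a (mem_univ a)).2.trans (hv b (mem_univ b)).1⟩
    induction i using Fin.addCases with
    | left a => simpa using hu a (mem_univ a)
    | right b => simpa using hv b (mem_univ b)

lemma setIntegral_chenPiece {n k m : ℕ} (h : k + m = n) (x y z : ℝ) (f : Fin n → ℝ → ℂ) :
    ∫ t in chenPiece n k x y z, ∏ i, f i (t i) =
      chenIterated k x y (fun a => f (Fin.cast h (Fin.castAdd m a))) *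
        chenIterated m y z (fun b => f (Fin.cast h (Fin.natAdd k b))) := by
  subst h
  rw [chenPiece_add_eq_preimage, chenIterated_eq_setIntegral, chenIterated_eq_setIntegral,
    ← setIntegral_prod_mul, ← Measure.volume_eq_prod]
  simp_rw [Fin.prod_univ_add]
  exact (volume_measurePreserving_piFinAddProd k m).setIntegral_preimage_emb
    (MeasurableEquiv.measurableEmbedding _)
    (fun q => (∏ a, f (Fin.castAdd m a) (q.1 a)) * ∏ b, f (Fin.natAdd k b) (q.2 b)) _

theorem chenIterated_eq_sum_mul {x y z : ℝ} (hxy : x ≤ y) (hyz : y ≤ z) (n : ℕ)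
    (f : Fin n → ℝ → ℂ) (hf : ∀ i, ContinuousOn (f i) (Icc x z)) :
    chenIterated n x z f =
      ∑ p : Fin (n + 1),
        chenIterated p x y (fun k => f ⟨k, k.isLt.trans_le (Nat.lt_succ_iff.mp p.isLt)⟩) *
          chenIterated (n - p) y z (fun k => f ⟨p + k, Nat.add_lt_of_lt_sub' k.isLt⟩) := by
  have hcover : ⋃ p : Fin (n + 1), chenPiece n p x y z = chenSimplex n x z :=
    (iUnion_subset fun p => chenPiece_subset hxy hyz).antisymm
      fun t ht => mem_iUnion.2 (exists_mem_chenPiece ht)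
  rw [chenIterated_eq_setIntegral, ← hcover,
    integral_iUnion_ae
      (fun p : Fin (n + 1) => (isClosed_chenPiece n p x y z).measurableSet.nullMeasurableSet)
      (pairwise_aedisjoint_chenPiece n x y z) (hcover ▸ integrableOn_chenSimplex hf),
    tsum_fintype]
  exact Finset.sum_congr rfl fun p _ =>
    setIntegral_chenPiece (Nat.add_sub_cancel' p.is_le) x y z f

/-- Corollary 1.3 (composition of paths): the iterated integral over the
concatenation of a path parametrized on `[0,1]` with one parametrized on `[1,2]`
decomposes as the sum of products of iterated integrals over the two pieces
(an empty iterated integral being `1`). -/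
theorem chenIterated_comp (n : ℕ) (f : Fin n → ℝ → ℂ)
    (hf : ∀ i, ContinuousOn (f i) (Set.Icc 0 2)) :
    chenIterated n 0 2 f =
      ∑ i : Fin (n + 1),
        chenIterated i.val 0 1
            (fun k => f ⟨k.val, lt_of_lt_of_le k.isLt (Nat.lt_succ_iff.mp i.isLt)⟩)
          * chenIterated (n - i.val) 1 2
            (fun k => f ⟨i.val + k.val, by have hk := k.isLt; omega⟩) := by
  exact chenIterated_eq_sum_mul zero_le_one one_le_two n f hf
end

section
/- Let a₁, b₁, a₂, b₂ : ℝ → ℂ be continuous on [0,1]. For i = 1,2 define hᵢ : ℝ → ℂ on [0,4] by hᵢ(t) = aᵢ(t) for t ∈ [0,1], hᵢ(t) = bᵢ(t−1) for t ∈ (1,2], hᵢ(t) = −aᵢ(3−t) for t ∈ (2,3], hᵢ(t) = −bᵢ(4−t) for t ∈ (3,4]. Then ∫_{0 ≤ s ≤ t ≤ 4} h₁(s)h₂(t) ds dt = (∫_0^1 a₁)(∫_0^1 b₂) − (∫_0^1 b₁)(∫_0^1 a₂). -/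
/-!
Write `∫∫ f g` for `∫_{c ≤ s ≤ t ≤ d} f(s) g(t)`. Two identities govern it. Chen's formula for
a concatenated interval `[c, e] = [c, d] ∪ [d, e]` adds the cross term `(∫_c^d f)(∫_d^e g)` to
the two pieces, and running a segment backwards (which negates both integrands) turns `∫∫ f g`
into `(∫ f)(∫ g) - ∫∫ f g`. On the four segments of the commutator loop the iterated integrals
are therefore `I_α`, `I_β`, `A₀A₁ - I_α`, `B₀B₁ - I_β`, the single integrals are `±Aᵢ`, `±Bᵢ`,
and after adding the six cross terms everything cancels except `A₀B₁ - B₀A₁`.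
-/

open Set intervalIntegral
open scoped Interval
open MeasureTheory (volume ae_of_all)

section IteratedIntegral

variable {𝕜 : Type*} [RCLike 𝕜] {f g f' g' : ℝ → 𝕜} {c d e x k : ℝ}

noncomputable def iteratedIntegral (f g : ℝ → 𝕜) (c d : ℝ) : 𝕜 :=
  ∫ t in c..d, ∫ s in c..t, f s * g t

theorem iteratedIntegral_eq_integral_primitive_mul :
    iteratedIntegral f g c d = ∫ t in c..d, (∫ s in c..t, f s) * g t := by
  simp only [iteratedIntegral, integral_mul_const]

theorem intervalIntegrable_primitive_mul (hf : IntervalIntegrable f volume c d)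
    (hg : IntervalIntegrable g volume c d) :
    IntervalIntegrable (fun t => (∫ s in c..t, f s) * g t) volume c d :=
  hg.continuousOn_mul (continuousOn_primitive_interval' hf left_mem_uIcc)

theorem iteratedIntegral_congr (hf : EqOn f f' (Ι c d)) (hg : EqOn g g' (Ι c d)) :
    iteratedIntegral f g c d = iteratedIntegral f' g' c d := by
  simp only [iteratedIntegral_eq_integral_primitive_mul]
  refine integral_congr_ae (ae_of_all _ fun t ht => ?_)
  have hct : Ι c t ⊆ Ι c d :=
    uIoc_subset_uIoc_of_uIcc_subset_uIcc (uIcc_subset_uIcc left_mem_uIcc (uIoc_subset_uIcc ht))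
  rw [integral_congr_ae (ae_of_all _ fun s hs => hf (hct hs)), hg ht]

theorem iteratedIntegral_comp_sub_right :
    iteratedIntegral (fun t => f (t - x)) (fun t => g (t - x)) c d
      = iteratedIntegral f g (c - x) (d - x) := by
  simp only [iteratedIntegral_eq_integral_primitive_mul, integral_comp_sub_right f]
  exact integral_comp_sub_right (fun u => (∫ s in c - x..u, f s) * g u) x

theorem iteratedIntegral_add_adjacent_intervals (hf₁ : IntervalIntegrable f volume c d)
    (hf₂ : IntervalIntegrable f volume d e) (hg₁ : IntervalIntegrable g volume c d)
    (hg₂ : IntervalIntegrable g volume d e) :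
    iteratedIntegral f g c e
      = iteratedIntegral f g c d + iteratedIntegral f g d e
        + (∫ t in c..d, f t) * ∫ t in d..e, g t := by
  have hsplit : EqOn (fun t => (∫ s in c..t, f s) * g t)
      (fun t => (∫ s in c..d, f s) * g t + (∫ s in d..t, f s) * g t) (uIcc d e) := fun t ht => by
    beta_reduce
    rw [← add_mul,
      integral_add_adjacent_intervals hf₁ (hf₂.mono_set (uIcc_subset_uIcc left_mem_uIcc ht))]
  have hsplit_integrable :
      IntervalIntegrable (fun t => (∫ s in c..d, f s) * g t + (∫ s in d..t, f s) * g t)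
        volume d e :=
    (hg₂.const_mul _).add (intervalIntegrable_primitive_mul hf₂ hg₂)
  simp only [iteratedIntegral_eq_integral_primitive_mul]
  rw [← integral_add_adjacent_intervals (intervalIntegrable_primitive_mul hf₁ hg₁)
      ((intervalIntegrable_congr (hsplit.mono uIoc_subset_uIcc)).mpr hsplit_integrable),
    integral_congr hsplit,
    integral_add (hg₂.const_mul _) (intervalIntegrable_primitive_mul hf₂ hg₂), integral_const_mul]
  ring

theorem iteratedIntegral_neg_comp_sub_left (hf : IntervalIntegrable f volume (k - d) (k - c))
    (hg : IntervalIntegrable g volume (k - d) (k - c)) :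
    iteratedIntegral (fun t => -f (k - t)) (fun t => -g (k - t)) c d
      = (∫ t in k - d..k - c, f t) * (∫ t in k - d..k - c, g t)
        - iteratedIntegral f g (k - d) (k - c) := by
  have hreverse : ∀ t, (∫ s in c..t, -f (k - s)) * -g (k - t)
      = (∫ s in k - t..k - c, f s) * g (k - t) := fun t => by
    rw [intervalIntegral.integral_neg, integral_comp_sub_left f, neg_mul_neg]
  have hsplit : EqOn (fun u => (∫ s in u..k - c, f s) * g u)
      (fun u => (∫ s in k - d..k - c, f s) * g u - (∫ s in k - d..u, f s) * g u)
      (uIcc (k - d) (k - c)) := fun u hu => by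
    beta_reduce
    rw [← sub_mul, integral_interval_sub_left hf (hf.mono_set (uIcc_subset_uIcc left_mem_uIcc hu))]
  simp only [iteratedIntegral_eq_integral_primitive_mul, hreverse]
  rw [integral_comp_sub_left (fun u => (∫ s in u..k - c, f s) * g u), integral_congr hsplit,
    integral_sub (hg.const_mul _) (intervalIntegrable_primitive_mul hf hg), integral_const_mul]

end IteratedIntegral

/-- Lemma 5.7(b)/3.26(b): for the commutator loop `[α,β] = αβα⁻¹β⁻¹`,
`∫_{[α,β]} ω₁∘ω₂ = ∫_α ω₁ ∫_β ω₂ − ∫_β ω₁ ∫_α ω₂`.  Here `a i`, `b i` are the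
pullbacks of `ωᵢ` along `α`, `β`, and `h i` is the pullback along `[α,β]`,
given piecewise on `[0,4]`. -/
theorem double_iterated_integral_over_commutator
    (a b h : Fin 2 → ℝ → ℂ)
    (ha : ∀ i, ContinuousOn (a i) (Set.Icc 0 1))
    (hb : ∀ i, ContinuousOn (b i) (Set.Icc 0 1))
    (h1 : ∀ i, ∀ t ∈ Set.Icc (0:ℝ) 1, h i t = a i t)
    (h2 : ∀ i, ∀ t ∈ Set.Ioc (1:ℝ) 2, h i t = b i (t - 1))
    (h3 : ∀ i, ∀ t ∈ Set.Ioc (2:ℝ) 3, h i t = -a i (3 - t))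
    (h4 : ∀ i, ∀ t ∈ Set.Ioc (3:ℝ) 4, h i t = -b i (4 - t)) :
    (∫ t in (0:ℝ)..4, ∫ s in (0:ℝ)..t, h 0 s * h 1 t)
      = (∫ t in (0:ℝ)..1, a 0 t) * (∫ t in (0:ℝ)..1, b 1 t)
        - (∫ t in (0:ℝ)..1, b 0 t) * (∫ t in (0:ℝ)..1, a 1 t) := by
  have haI i : IntervalIntegrable (a i) volume 0 1 := (ha i).intervalIntegrable_of_Icc zero_le_one
  have hbI i : IntervalIntegrable (b i) volume 0 1 := (hb i).intervalIntegrable_of_Icc zero_le_one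
  have e₁ : ∀ i, EqOn (h i) (a i) (Ι 0 1) := by
    rw [uIoc_of_le zero_le_one]; exact fun i t ht => h1 i t (Ioc_subset_Icc_self ht)
  have e₂ : ∀ i, EqOn (h i) (fun t => b i (t - 1)) (Ι 1 2) := by
    rw [uIoc_of_le one_le_two]; exact h2
  have e₃ : ∀ i, EqOn (h i) (fun t => -a i (3 - t)) (Ι 2 3) := by
    rw [uIoc_of_le (by norm_num)]; exact h3
  have e₄ : ∀ i, EqOn (h i) (fun t => -b i (4 - t)) (Ι 3 4) := by
    rw [uIoc_of_le (by norm_num)]; exact h4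
  have I₁ i : IntervalIntegrable (h i) volume 0 1 := (intervalIntegrable_congr (e₁ i)).mpr (haI i)
  have I₂ i : IntervalIntegrable (h i) volume 1 2 := (intervalIntegrable_congr (e₂ i)).mpr
    (by simpa [one_add_one_eq_two] using (hbI i).comp_sub_right 1)
  have I₃ i : IntervalIntegrable (h i) volume 2 3 := (intervalIntegrable_congr (e₃ i)).mpr
    (by simpa [Pi.neg_def, show (3:ℝ) - 1 = 2 by norm_num] using ((haI i).comp_sub_left 3).neg.symm)
  have I₄ i : IntervalIntegrable (h i) volume 3 4 := (intervalIntegrable_congr (e₄ i)).mpr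
    (by simpa [Pi.neg_def, show (4:ℝ) - 1 = 3 by norm_num] using ((hbI i).comp_sub_left 4).neg.symm)
  have v₁ i : ∫ t in (0:ℝ)..1, h i t = ∫ t in (0:ℝ)..1, a i t :=
    integral_congr_ae (ae_of_all _ (e₁ i))
  have v₂ i : ∫ t in (1:ℝ)..2, h i t = ∫ t in (0:ℝ)..1, b i t := by
    rw [integral_congr_ae (ae_of_all _ (e₂ i)), integral_comp_sub_right]; norm_num
  have v₃ i : ∫ t in (2:ℝ)..3, h i t = -∫ t in (0:ℝ)..1, a i t := by
    rw [integral_congr_ae (ae_of_all _ (e₃ i)), intervalIntegral.integral_neg,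
      integral_comp_sub_left]; norm_num
  have v₄ i : ∫ t in (3:ℝ)..4, h i t = -∫ t in (0:ℝ)..1, b i t := by
    rw [integral_congr_ae (ae_of_all _ (e₄ i)), intervalIntegral.integral_neg,
      integral_comp_sub_left]; norm_num
  have w₁ : iteratedIntegral (h 0) (h 1) 0 1 = iteratedIntegral (a 0) (a 1) 0 1 :=
    iteratedIntegral_congr (e₁ 0) (e₁ 1)
  have w₂ : iteratedIntegral (h 0) (h 1) 1 2 = iteratedIntegral (b 0) (b 1) 0 1 := by
    rw [iteratedIntegral_congr (e₂ 0) (e₂ 1), iteratedIntegral_comp_sub_right]; norm_num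
  have w₃ : iteratedIntegral (h 0) (h 1) 2 3
      = (∫ t in (0:ℝ)..1, a 0 t) * (∫ t in (0:ℝ)..1, a 1 t) - iteratedIntegral (a 0) (a 1) 0 1 := by
    rw [iteratedIntegral_congr (e₃ 0) (e₃ 1), iteratedIntegral_neg_comp_sub_left] <;> norm_num [haI]
  have w₄ : iteratedIntegral (h 0) (h 1) 3 4
      = (∫ t in (0:ℝ)..1, b 0 t) * (∫ t in (0:ℝ)..1, b 1 t) - iteratedIntegral (b 0) (b 1) 0 1 := by
    rw [iteratedIntegral_congr (e₄ 0) (e₄ 1), iteratedIntegral_neg_comp_sub_left] <;> norm_num [hbI]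
  have I₁₂ i := (I₁ i).trans (I₂ i)
  change iteratedIntegral (h 0) (h 1) 0 4 = _
  rw [iteratedIntegral_add_adjacent_intervals ((I₁₂ 0).trans (I₃ 0)) (I₄ 0)
      ((I₁₂ 1).trans (I₃ 1)) (I₄ 1),
    iteratedIntegral_add_adjacent_intervals (I₁₂ 0) (I₃ 0) (I₁₂ 1) (I₃ 1),
    iteratedIntegral_add_adjacent_intervals (I₁ 0) (I₂ 0) (I₁ 1) (I₂ 1),
    ← integral_add_adjacent_intervals (I₁₂ 0) (I₃ 0),
    ← integral_add_adjacent_intervals (I₁ 0) (I₂ 0), w₁, w₂, w₃, w₄]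
  simp only [v₁, v₂, v₃, v₄]
  ring
end

section
/- Let aᵢ, bᵢ, cᵢ : ℝ → ℂ (i = 1,2,3) be continuous on [0,1]. For each i define hᵢ : ℝ → ℂ on [0,10] by: hᵢ(t) = aᵢ(t) on [0,1], bᵢ(t−1) on (1,2], −aᵢ(3−t) on (2,3], −bᵢ(4−t) on (3,4], cᵢ(t−4) on (4,5], bᵢ(t−5) on (5,6], aᵢ(t−6) on (6,7], −bᵢ(8−t) on (7,8], −aᵢ(9−t) on (8,9], −cᵢ(10−t) on (9,10]. Write Aᵢ = ∫_0^1 aᵢ, Bᵢ = ∫_0^1 bᵢ, Cᵢ = ∫_0^1 cᵢ. Then ∫_{0 ≤ t₁ ≤ t₂ ≤ t₃ ≤ 10} h₁(t₁)h₂(t₂)h₃(t₃) dt₁dt₂dt₃ = (A₁B₂ − B₁A₂)C₃ + (A₃B₂ − B₃A₂)C₁. -/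
/-!
The iterated integrals `∫ω₀, ∫ω₁, ∫ω₂, ∫ω₀ω₁, ∫ω₁ω₂, ∫ω₀ω₁ω₂` along a path are the coordinates of
an element of a group (Chen): concatenating paths multiplies these elements and reversing a path
inverts them. The signature of `[[α,β],τ]` is therefore the double commutator `⁅⁅A, B⁆, C⁆` of the
signatures of `α`, `β`, `τ`, and in the level-three coordinate of a double commutator all level-two
and level-three coordinates of the three factors cancel.
-/

open MeasureTheory Set intervalIntegral
open scoped commutatorElement Interval

theorem IntervalIntegrable.mono_of_le {E : Type*} [NormedAddCommGroup E] {μ : Measure ℝ}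
    {f : ℝ → E} {a b c d : ℝ} (hf : IntervalIntegrable f μ a b) (hac : a ≤ c) (hcd : c ≤ d)
    (hdb : d ≤ b) : IntervalIntegrable f μ c d :=
  hf.mono_set (uIcc_subset_uIcc (mem_uIcc_of_le hac (hcd.trans hdb))
    (mem_uIcc_of_le (hac.trans hcd) hdb))

theorem Set.uIoc_subset_uIoc_of_mem {α : Type*} [LinearOrder α] {a b x : α} (hx : x ∈ Ι a b) :
    Ι a x ⊆ Ι a b :=
  uIoc_subset_uIoc_of_uIcc_subset_uIcc (uIcc_subset_uIcc_left (uIoc_subset_uIcc hx))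

theorem Set.sub_mem_uIcc_zero {L t : ℝ} (ht : t ∈ [[0, L]]) : L - t ∈ [[0, L]] := by
  rwa [← mem_preimage, preimage_const_sub_uIcc, sub_zero, sub_self, uIcc_comm]

theorem IntervalIntegrable.neg_comp_sub_left {f : ℝ → ℂ} {L : ℝ}
    (hf : IntervalIntegrable f volume 0 L) :
    IntervalIntegrable (fun t => -f (L - t)) volume 0 L := by
  have := (hf.comp_sub_left L).neg
  rw [sub_zero, sub_self] at this
  exact this.symm

theorem IntervalIntegrable.of_eqOn_comp_sub_right {g h : ℝ → ℂ} {d : ℝ}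
    (hg : IntervalIntegrable g volume 0 1) (hh : EqOn h (fun t => g (t - d)) (Ioc d (d + 1))) :
    IntervalIntegrable h volume d (d + 1) := by
  have := hg.comp_sub_right d
  rw [zero_add, add_comm] at this
  exact this.congr (hh.symm.mono (by rw [uIoc_of_le (by linarith)]))

namespace IteratedIntegral

noncomputable def integral₂ (f g : ℝ → ℂ) (u v : ℝ) : ℂ :=
  ∫ t in u..v, (∫ s in u..t, f s) * g t

noncomputable def integral₃ (f g k : ℝ → ℂ) (u v : ℝ) : ℂ :=
  ∫ t in u..v, integral₂ f g u t * k t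

variable {f g k : ℝ → ℂ} {u v w : ℝ}

theorem integral_integral_integral_eq_integral₃ (f g k : ℝ → ℂ) (u v : ℝ) :
    ∫ t₃ in u..v, ∫ t₂ in u..t₃, ∫ t₁ in u..t₂, f t₁ * g t₂ * k t₃ = integral₃ f g k u v := by
  simp only [integral₃, integral₂, intervalIntegral.integral_mul_const]

theorem integral₂_same : integral₂ f g u u = 0 := integral_same

theorem intervalIntegrable_primitive_mul (hf : IntervalIntegrable f volume u w)
    (hg : IntervalIntegrable g volume u w) :
    IntervalIntegrable (fun t => (∫ s in u..t, f s) * g t) volume u w :=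
  hg.continuousOn_mul (continuousOn_primitive_interval' hf left_mem_uIcc)

theorem intervalIntegrable_integral₂_mul (hf : IntervalIntegrable f volume u w)
    (hg : IntervalIntegrable g volume u w) (hk : IntervalIntegrable k volume u w) :
    IntervalIntegrable (fun t => integral₂ f g u t * k t) volume u w :=
  hk.continuousOn_mul
    (continuousOn_primitive_interval' (intervalIntegrable_primitive_mul hf hg) left_mem_uIcc)

theorem integral₂_add_adjacent (hf : IntervalIntegrable f volume u w)
    (hg : IntervalIntegrable g volume u w) (huv : u ≤ v) (hvw : v ≤ w) :
    integral₂ f g u v + (∫ t in u..v, f t) * (∫ t in v..w, g t) + integral₂ f g v w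
      = integral₂ f g u w := by
  have hfv := hf.mono_of_le huv hvw le_rfl
  have hgv := hg.mono_of_le huv hvw le_rfl
  have split : ∀ t ∈ [[v, w]], (∫ s in u..t, f s) * g t
      = (∫ s in u..v, f s) * g t + (∫ s in v..t, f s) * g t := fun t ht => by
    rw [uIcc_of_le hvw] at ht
    rw [← add_mul, integral_add_adjacent_intervals (hf.mono_of_le le_rfl huv hvw)
      (hf.mono_of_le huv ht.1 ht.2)]
  have hint := intervalIntegrable_primitive_mul hf hg
  rw [integral₂, integral₂, integral₂, ← integral_add_adjacent_intervals
    (hint.mono_of_le le_rfl huv hvw) (hint.mono_of_le huv hvw le_rfl),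
    integral_congr split, integral_add (hgv.const_mul _) (intervalIntegrable_primitive_mul hfv hgv),
    intervalIntegral.integral_const_mul, add_assoc]

theorem integral₃_add_adjacent (hf : IntervalIntegrable f volume u w)
    (hg : IntervalIntegrable g volume u w) (hk : IntervalIntegrable k volume u w)
    (huv : u ≤ v) (hvw : v ≤ w) :
    integral₃ f g k u v + integral₂ f g u v * (∫ t in v..w, k t)
        + (∫ t in u..v, f t) * integral₂ g k v w + integral₃ f g k v w
      = integral₃ f g k u w := by
  have hfv := hf.mono_of_le huv hvw le_rfl
  have hgv := hg.mono_of_le huv hvw le_rfl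
  have hkv := hk.mono_of_le huv hvw le_rfl
  have split : ∀ t ∈ [[v, w]], integral₂ f g u t * k t
      = (integral₂ f g u v * k t + (∫ s in u..v, f s) * ((∫ s in v..t, g s) * k t))
        + integral₂ f g v t * k t := fun t ht => by
    rw [uIcc_of_le hvw] at ht
    rw [← integral₂_add_adjacent (hf.mono_of_le le_rfl (huv.trans ht.1) ht.2)
      (hg.mono_of_le le_rfl (huv.trans ht.1) ht.2) huv ht.1]
    ring
  have hint := intervalIntegrable_integral₂_mul hf hg hk
  rw [integral₃, integral₃, integral₃, ← integral_add_adjacent_intervals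
    (hint.mono_of_le le_rfl huv hvw) (hint.mono_of_le huv hvw le_rfl),
    integral_congr split, integral_add ((hkv.const_mul _).add
      ((intervalIntegrable_primitive_mul hgv hkv).const_mul _))
      (intervalIntegrable_integral₂_mul hfv hgv hkv),
    integral_add (hkv.const_mul _) ((intervalIntegrable_primitive_mul hgv hkv).const_mul _),
    intervalIntegral.integral_const_mul, intervalIntegral.integral_const_mul]
  simp only [add_assoc]
  rfl

theorem integral₂_congr {f' g' : ℝ → ℂ} (hf : EqOn f f' (Ι u v)) (hg : EqOn g g' (Ι u v)) :
    integral₂ f g u v = integral₂ f' g' u v :=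
  integral_congr_ae <| ae_of_all _ fun t ht => by
    rw [integral_congr_ae (ae_of_all _ (hf.mono (uIoc_subset_uIoc_of_mem ht))), hg ht]

theorem integral₃_congr {f' g' k' : ℝ → ℂ} (hf : EqOn f f' (Ι u v)) (hg : EqOn g g' (Ι u v))
    (hk : EqOn k k' (Ι u v)) : integral₃ f g k u v = integral₃ f' g' k' u v :=
  integral_congr_ae <| ae_of_all _ fun t ht => by
    rw [integral₂_congr (hf.mono (uIoc_subset_uIoc_of_mem ht))
      (hg.mono (uIoc_subset_uIoc_of_mem ht)), hk ht]

theorem integral₂_comp_sub_right (f g : ℝ → ℂ) (u v d : ℝ) :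
    integral₂ (fun t => f (t - d)) (fun t => g (t - d)) u v = integral₂ f g (u - d) (v - d) := by
  simp only [integral₂, integral_comp_sub_right]
  exact integral_comp_sub_right (fun t => (∫ s in u - d..t, f s) * g t) d

theorem integral₃_comp_sub_right (f g k : ℝ → ℂ) (u v d : ℝ) :
    integral₃ (fun t => f (t - d)) (fun t => g (t - d)) (fun t => k (t - d)) u v
      = integral₃ f g k (u - d) (v - d) := by
  simp only [integral₃, integral₂_comp_sub_right]
  exact integral_comp_sub_right (fun t => integral₂ f g (u - d) t * k t) d

/- Along the reversed path every primitive is rewritten with base point `0`, so reversal is a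
change of variables followed by linear algebra, with no Fubini argument. -/

variable {L : ℝ}

theorem integral_neg_comp_sub_left (hf : IntervalIntegrable f volume 0 L) {t : ℝ}
    (ht : t ∈ [[0, L]]) :
    ∫ s in 0..t, -f (L - s) = (∫ s in 0..L - t, f s) - ∫ s in 0..L, f s := by
  rw [intervalIntegral.integral_neg, integral_comp_sub_left, sub_zero,
    ← integral_interval_sub_left hf (hf.mono_set (uIcc_subset_uIcc_left (sub_mem_uIcc_zero ht)))]
  ring

theorem integral₂_neg_comp_sub_left (hf : IntervalIntegrable f volume 0 L)
    (hg : IntervalIntegrable g volume 0 L) {t : ℝ} (ht : t ∈ [[0, L]]) :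
    integral₂ (fun s => -f (L - s)) (fun s => -g (L - s)) 0 t
      = ((∫ s in 0..L, f s) * (∫ s in 0..L, g s) - integral₂ f g 0 L)
        - ((∫ s in 0..L, f s) * (∫ s in 0..L - t, g s) - integral₂ f g 0 (L - t)) := by
  have hLt := sub_mem_uIcc_zero ht
  have hint := intervalIntegrable_primitive_mul hf hg
  have primitive : ∀ s ∈ [[0, t]], (∫ r in 0..s, -f (L - r)) * -g (L - s)
      = (fun x => (∫ r in 0..L, f r) * g x - (∫ r in 0..x, f r) * g x) (L - s) := fun s hs => by
    rw [integral_neg_comp_sub_left hf (uIcc_subset_uIcc_left ht hs)]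
    ring
  rw [integral₂, integral_congr primitive,
    integral_comp_sub_left (fun x => (∫ r in 0..L, f r) * g x - (∫ r in 0..x, f r) * g x),
    sub_zero, integral_sub ((hg.const_mul _).mono_set (uIcc_subset_uIcc_right hLt))
      (hint.mono_set (uIcc_subset_uIcc_right hLt)),
    intervalIntegral.integral_const_mul,
    ← integral_interval_sub_left hg (hg.mono_set (uIcc_subset_uIcc_left hLt)),
    ← integral_interval_sub_left hint (hint.mono_set (uIcc_subset_uIcc_left hLt))]
  simp only [integral₂]
  ring

theorem integral₃_neg_comp_sub_left (hf : IntervalIntegrable f volume 0 L)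
    (hg : IntervalIntegrable g volume 0 L) (hk : IntervalIntegrable k volume 0 L) :
    integral₃ (fun s => -f (L - s)) (fun s => -g (L - s)) (fun s => -k (L - s)) 0 L
      = integral₂ f g 0 L * (∫ s in 0..L, k s) + (∫ s in 0..L, f s) * integral₂ g k 0 L
        - (∫ s in 0..L, f s) * (∫ s in 0..L, g s) * (∫ s in 0..L, k s)
        - integral₃ f g k 0 L := by
  set F := ∫ s in 0..L, f s
  set G := ∫ s in 0..L, g s
  have level₂ : ∀ s ∈ [[0, L]],
      integral₂ (fun r => -f (L - r)) (fun r => -g (L - r)) 0 s * -k (L - s)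
        = (fun x => (integral₂ f g 0 L - F * G) * k x + F * ((∫ r in 0..x, g r) * k x)
            - integral₂ f g 0 x * k x) (L - s) := fun s hs => by
    rw [integral₂_neg_comp_sub_left hf hg hs]
    ring
  rw [integral₃, integral_congr level₂, integral_comp_sub_left (fun x =>
      (integral₂ f g 0 L - F * G) * k x + F * ((∫ r in 0..x, g r) * k x)
        - integral₂ f g 0 x * k x), sub_self, sub_zero,
    integral_sub ((hk.const_mul _).add ((intervalIntegrable_primitive_mul hg hk).const_mul _))
      (intervalIntegrable_integral₂_mul hf hg hk),
    integral_add (hk.const_mul _) ((intervalIntegrable_primitive_mul hg hk).const_mul _),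
    intervalIntegral.integral_const_mul, intervalIntegral.integral_const_mul]
  simp only [integral₂, integral₃]
  ring

/-- The coordinates of `1 + ∑ x_w e_w` in the quotient of the free algebra on `e₀, e₁, e₂` by the
ideal spanned by the words that are not factors of `e₀e₁e₂`; multiplication is the product there. -/
@[ext]
structure Sig where
  x₀ : ℂ
  x₁ : ℂ
  x₂ : ℂ
  x₀₁ : ℂ
  x₁₂ : ℂ
  x₀₁₂ : ℂ

namespace Sig

instance : Mul Sig where
  mul x y := ⟨x.x₀ + y.x₀, x.x₁ + y.x₁, x.x₂ + y.x₂, x.x₀₁ + x.x₀ * y.x₁ + y.x₀₁,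
    x.x₁₂ + x.x₁ * y.x₂ + y.x₁₂, x.x₀₁₂ + x.x₀₁ * y.x₂ + x.x₀ * y.x₁₂ + y.x₀₁₂⟩

instance : One Sig where
  one := ⟨0, 0, 0, 0, 0, 0⟩

instance : Inv Sig where
  inv x := ⟨-x.x₀, -x.x₁, -x.x₂, x.x₀ * x.x₁ - x.x₀₁, x.x₁ * x.x₂ - x.x₁₂,
    x.x₀₁ * x.x₂ + x.x₀ * x.x₁₂ - x.x₀ * x.x₁ * x.x₂ - x.x₀₁₂⟩

theorem mul_def (x y : Sig) :
    x * y = ⟨x.x₀ + y.x₀, x.x₁ + y.x₁, x.x₂ + y.x₂, x.x₀₁ + x.x₀ * y.x₁ + y.x₀₁,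
      x.x₁₂ + x.x₁ * y.x₂ + y.x₁₂, x.x₀₁₂ + x.x₀₁ * y.x₂ + x.x₀ * y.x₁₂ + y.x₀₁₂⟩ := rfl

theorem one_def : (1 : Sig) = ⟨0, 0, 0, 0, 0, 0⟩ := rfl

theorem inv_def (x : Sig) :
    x⁻¹ = ⟨-x.x₀, -x.x₁, -x.x₂, x.x₀ * x.x₁ - x.x₀₁, x.x₁ * x.x₂ - x.x₁₂,
      x.x₀₁ * x.x₂ + x.x₀ * x.x₁₂ - x.x₀ * x.x₁ * x.x₂ - x.x₀₁₂⟩ := rfl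

instance : Group Sig :=
  Group.ofLeftAxioms
    (fun x y z => by ext <;> simp only [mul_def] <;> ring)
    (fun x => by ext <;> simp only [mul_def, one_def] <;> ring)
    (fun x => by ext <;> simp only [mul_def, inv_def, one_def] <;> ring)

theorem x₀₁₂_commutatorElement_commutatorElement (x y z : Sig) :
    ⁅⁅x, y⁆, z⁆.x₀₁₂
      = (x.x₀ * y.x₁ - y.x₀ * x.x₁) * z.x₂ + (x.x₂ * y.x₁ - y.x₂ * x.x₁) * z.x₀ := by
  simp only [commutatorElement_def, mul_def, inv_def]
  ring

end Sig

noncomputable def signature (f : Fin 3 → ℝ → ℂ) (u v : ℝ) : Sig :=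
  ⟨∫ t in u..v, f 0 t, ∫ t in u..v, f 1 t, ∫ t in u..v, f 2 t, integral₂ (f 0) (f 1) u v,
    integral₂ (f 1) (f 2) u v, integral₃ (f 0) (f 1) (f 2) u v⟩

theorem signature_self (f : Fin 3 → ℝ → ℂ) (u : ℝ) : signature f u u = 1 := by
  ext <;> simp only [signature, integral_same, integral₂_same, integral₃, Sig.one_def]

theorem signature_mul_signature {f : Fin 3 → ℝ → ℂ}
    (hf : ∀ i, IntervalIntegrable (f i) volume u w) (huv : u ≤ v) (hvw : v ≤ w) :
    signature f u v * signature f v w = signature f u w := by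
  ext <;> simp only [signature, Sig.mul_def]
  · exact integral_add_adjacent_intervals ((hf 0).mono_of_le le_rfl huv hvw)
      ((hf 0).mono_of_le huv hvw le_rfl)
  · exact integral_add_adjacent_intervals ((hf 1).mono_of_le le_rfl huv hvw)
      ((hf 1).mono_of_le huv hvw le_rfl)
  · exact integral_add_adjacent_intervals ((hf 2).mono_of_le le_rfl huv hvw)
      ((hf 2).mono_of_le huv hvw le_rfl)
  · exact integral₂_add_adjacent (hf 0) (hf 1) huv hvw
  · exact integral₂_add_adjacent (hf 1) (hf 2) huv hvw
  · exact integral₃_add_adjacent (hf 0) (hf 1) (hf 2) huv hvw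

theorem signature_congr {f g : Fin 3 → ℝ → ℂ} (hfg : ∀ i, EqOn (f i) (g i) (Ι u v)) :
    signature f u v = signature g u v := by
  ext
  · exact integral_congr_ae (ae_of_all _ (hfg 0))
  · exact integral_congr_ae (ae_of_all _ (hfg 1))
  · exact integral_congr_ae (ae_of_all _ (hfg 2))
  · exact integral₂_congr (hfg 0) (hfg 1)
  · exact integral₂_congr (hfg 1) (hfg 2)
  · exact integral₃_congr (hfg 0) (hfg 1) (hfg 2)

theorem signature_comp_sub_right (f : Fin 3 → ℝ → ℂ) (u v d : ℝ) :
    signature (fun i t => f i (t - d)) u v = signature f (u - d) (v - d) := by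
  simp only [signature, integral_comp_sub_right, integral₂_comp_sub_right,
    integral₃_comp_sub_right]

def reverse (f : Fin 3 → ℝ → ℂ) (L : ℝ) : Fin 3 → ℝ → ℂ := fun i t => -f i (L - t)

theorem intervalIntegrable_reverse {f : Fin 3 → ℝ → ℂ}
    (hf : ∀ i, IntervalIntegrable (f i) volume 0 L) (i : Fin 3) :
    IntervalIntegrable (reverse f L i) volume 0 L :=
  (hf i).neg_comp_sub_left

theorem signature_reverse {f : Fin 3 → ℝ → ℂ} (hf : ∀ i, IntervalIntegrable (f i) volume 0 L) :
    signature (reverse f L) 0 L = (signature f 0 L)⁻¹ := by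
  have hL : L ∈ [[0, L]] := right_mem_uIcc
  ext <;> simp only [signature, Sig.inv_def] <;> unfold reverse
  · rw [integral_neg_comp_sub_left (hf 0) hL, sub_self, integral_same, zero_sub]
  · rw [integral_neg_comp_sub_left (hf 1) hL, sub_self, integral_same, zero_sub]
  · rw [integral_neg_comp_sub_left (hf 2) hL, sub_self, integral_same, zero_sub]
  · rw [integral₂_neg_comp_sub_left (hf 0) (hf 1) hL, sub_self, integral_same,
      integral₂_same, mul_zero, sub_zero, sub_zero]
  · rw [integral₂_neg_comp_sub_left (hf 1) (hf 2) hL, sub_self, integral_same,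
      integral₂_same, mul_zero, sub_zero, sub_zero]
  · exact integral₃_neg_comp_sub_left (hf 0) (hf 1) (hf 2)

theorem signature_eq_prod_ofFn {n : ℕ} {h : Fin 3 → ℝ → ℂ} (g : Fin n → Fin 3 → ℝ → ℂ)
    (hg : ∀ k i, IntervalIntegrable (g k i) volume 0 1)
    (hh : ∀ k : Fin n, ∀ i, EqOn (h i) (fun t => g k i (t - k)) (Ioc (k : ℝ) (k + 1))) :
    signature h 0 n = (List.ofFn fun k => signature (g k) 0 1).prod := by
  induction n with
  | zero => simp [signature_self]
  | succ n ih =>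
    have hint : ∀ i, IntervalIntegrable (h i) volume 0 (n + 1) := fun i => by
      simpa using IntervalIntegrable.trans_iterate (a := fun k : ℕ => (k : ℝ)) (n := n + 1)
        fun k hk => by simpa using (hg ⟨k, hk⟩ i).of_eqOn_comp_sub_right (hh ⟨k, hk⟩ i)
    have last : signature h n (n + 1) = signature (g (Fin.last n)) 0 1 := by
      rw [signature_congr (g := fun i t => g (Fin.last n) i (t - n)), signature_comp_sub_right,
        sub_self, add_sub_cancel_left]
      intro i
      rw [uIoc_of_le (by linarith)]
      simpa using hh (Fin.last n) i
    rw [List.ofFn_succ', List.concat_eq_append, List.prod_append, List.prod_singleton,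
      ← ih (fun k => g k.castSucc) (fun k => hg _) (fun k => by simpa using hh k.castSucc), ← last,
      Nat.cast_succ, signature_mul_signature hint (Nat.cast_nonneg n) (by linarith)]

end IteratedIntegral

open IteratedIntegral

/-- The double-commutator formula from Proposition 3.25: for the loop
`[[α,β],τ] = αβα⁻¹β⁻¹ · τ · βαβ⁻¹α⁻¹ · τ⁻¹`, the triple iterated integral is
`(∫_α ω₁ ∫_β ω₂ − ∫_β ω₁ ∫_α ω₂)∫_τ ω₃ + (∫_α ω₃ ∫_β ω₂ − ∫_β ω₃ ∫_α ω₂)∫_τ ω₁`.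
Here `a i`, `b i`, `c i` are the pullbacks of `ωᵢ` along `α`, `β`, `τ`, and
`h i` is the pullback along `[[α,β],τ]`, given piecewise on `[0,10]`. -/
theorem triple_iterated_integral_over_double_commutator
    (a b c h : Fin 3 → ℝ → ℂ)
    (ha : ∀ i, ContinuousOn (a i) (Set.Icc 0 1))
    (hb : ∀ i, ContinuousOn (b i) (Set.Icc 0 1))
    (hc : ∀ i, ContinuousOn (c i) (Set.Icc 0 1))
    (h1 : ∀ i, ∀ t ∈ Set.Icc (0:ℝ) 1, h i t = a i t)
    (h2 : ∀ i, ∀ t ∈ Set.Ioc (1:ℝ) 2, h i t = b i (t - 1))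
    (h3 : ∀ i, ∀ t ∈ Set.Ioc (2:ℝ) 3, h i t = -a i (3 - t))
    (h4 : ∀ i, ∀ t ∈ Set.Ioc (3:ℝ) 4, h i t = -b i (4 - t))
    (h5 : ∀ i, ∀ t ∈ Set.Ioc (4:ℝ) 5, h i t = c i (t - 4))
    (h6 : ∀ i, ∀ t ∈ Set.Ioc (5:ℝ) 6, h i t = b i (t - 5))
    (h7 : ∀ i, ∀ t ∈ Set.Ioc (6:ℝ) 7, h i t = a i (t - 6))
    (h8 : ∀ i, ∀ t ∈ Set.Ioc (7:ℝ) 8, h i t = -b i (8 - t))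
    (h9 : ∀ i, ∀ t ∈ Set.Ioc (8:ℝ) 9, h i t = -a i (9 - t))
    (h10 : ∀ i, ∀ t ∈ Set.Ioc (9:ℝ) 10, h i t = -c i (10 - t)) :
    (∫ t₃ in (0:ℝ)..10, ∫ t₂ in (0:ℝ)..t₃, ∫ t₁ in (0:ℝ)..t₂, h 0 t₁ * h 1 t₂ * h 2 t₃)
      = ((∫ t in (0:ℝ)..1, a 0 t) * (∫ t in (0:ℝ)..1, b 1 t)
          - (∫ t in (0:ℝ)..1, b 0 t) * (∫ t in (0:ℝ)..1, a 1 t)) * (∫ t in (0:ℝ)..1, c 2 t)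
        + ((∫ t in (0:ℝ)..1, a 2 t) * (∫ t in (0:ℝ)..1, b 1 t)
          - (∫ t in (0:ℝ)..1, b 2 t) * (∫ t in (0:ℝ)..1, a 1 t)) * (∫ t in (0:ℝ)..1, c 0 t) := by
  have hA i := (ha i).intervalIntegrable_of_Icc (μ := volume) zero_le_one
  have hB i := (hb i).intervalIntegrable_of_Icc (μ := volume) zero_le_one
  have hC i := (hc i).intervalIntegrable_of_Icc (μ := volume) zero_le_one
  have pieces := signature_eq_prod_ofFn (n := 10) (h := h)
    ![a, b, reverse a 1, reverse b 1, c, b, a, reverse b 1, reverse a 1, reverse c 1]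
    (fun k i => by fin_cases k <;> simp [hA, hB, hC, intervalIntegrable_reverse])
    (fun k i t ht => by
      fin_cases k <;> norm_num [reverse] at ht ⊢
      · exact h1 i t ⟨ht.1.le, ht.2⟩
      · exact h2 i t ht
      · rw [h3 i t ht]; ring_nf
      · rw [h4 i t ht]; ring_nf
      · exact h5 i t ht
      · exact h6 i t ht
      · exact h7 i t ht
      · rw [h8 i t ht]; ring_nf
      · rw [h9 i t ht]; ring_nf
      · rw [h10 i t ht]; ring_nf)
  have hcomm : signature h 0 10 = ⁅⁅signature a 0 1, signature b 0 1⁆, signature c 0 1⁆ := by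
    rw [Nat.cast_ofNat] at pieces
    simp only [List.ofFn_succ, Matrix.cons_val_zero, Matrix.cons_val_succ, List.ofFn_zero,
      List.prod_cons, List.prod_nil, mul_one, signature_reverse hA, signature_reverse hB,
      signature_reverse hC] at pieces
    rw [pieces, commutatorElement_def, commutatorElement_def]
    group
  rw [integral_integral_integral_eq_integral₃]
  exact (congrArg Sig.x₀₁₂ hcomm).trans (Sig.x₀₁₂_commutatorElement_commutatorElement _ _ _)
end

section
/- Let m₁, m₂, m₃, n₁, n₂, n₃ be integers, set D₁ = m₂n₃ − m₃n₂, D₂ = m₃n₁ − m₁n₃, D₃ = m₁n₂ − m₂n₁, K = n₁n₂m₃ + n₂n₃m₁ + n₃n₁m₂ − m₁m₂n₃ − m₂m₃n₁ − m₃m₁n₂, and K_j = m₁m₂n₃ − m₁n₂m₃ + n₁m₂n₃ − n₁n₂m₃ + n₁m₂m₃ − m₁n₂n₃. Let G₁, G₂, G₃ : ℝ → ℂ be continuously differentiable and nonvanishing on [0,1], set uₖ = ∫_0^1 Gₖ'(t)/Gₖ(t) dt, and set Log = (2πi)²·(πi·K_j + D₁u₁ + D₂u₂ + D₃u₃). Then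 exp((2πi)^{−2}·Log) · G₁(0)^{D₁} · G₂(0)^{D₂} · G₃(0)^{D₃} = (−1)^K · G₁(1)^{D₁} · G₂(1)^{D₂} · G₃(1)^{D₃}, where the powers are integer powers of nonzero complex numbers. -/
open Complex Set

/-!
For `G` of class `C¹` and nonvanishing on `[a, b]`, the function `t ↦ exp (-∫ₐᵗ G'/G) * G t` has
derivative zero, hence `exp (∫ₐᵇ G'/G) * G a = G b`; raising this to the power `Dₖ` turns each
`exp (Dₖ uₖ) * Gₖ 0 ^ Dₖ` into `Gₖ 1 ^ Dₖ`. The remaining factor is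
`exp (π i K_j) = (-1) ^ K_j = (-1) ^ K`, because `K_j + K = 2 (n₁ m₂ n₃ - m₁ n₂ m₃)`.
-/

theorem exp_integral_div_mul_eq {a b : ℝ} (hab : a ≤ b) {G G' : ℝ → ℂ}
    (hG : ∀ t ∈ Icc a b, HasDerivAt G (G' t) t) (hG' : ContinuousOn G' (Icc a b))
    (hG0 : ∀ t ∈ Icc a b, G t ≠ 0) :
    exp (∫ t in a..b, G' t / G t) * G a = G b := by
  have hq : ContinuousOn (fun t => G' t / G t) (Icc a b) :=
    hG'.div (fun t ht => (hG t ht).continuousAt.continuousWithinAt) hG0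
  -- extending `G' / G` continuously beyond `[a, b]` makes its primitive differentiable everywhere
  set φ : ℝ → ℂ := IccExtend hab ((Icc a b).domRestrict fun t => G' t / G t)
  have hφ : Continuous φ := (continuousOn_iff_continuous_domRestrict.mp hq).Icc_extend'
  have hφ_eq : EqOn φ (fun t => G' t / G t) (Icc a b) := fun t ht => IccExtend_of_mem _ _ ht
  set F : ℝ → ℂ := fun u => ∫ s in a..u, φ s
  have hF : ∀ t, HasDerivAt F (φ t) t := fun t => (hφ.integral_hasStrictDerivAt a t).hasDerivAt
  have hH : ∀ t ∈ Icc a b, HasDerivAt (fun u => exp (-F u) * G u) 0 t := by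
    intro t ht
    refine ((hF t).neg.cexp.mul (hG t ht)).congr_deriv ?_
    rw [hφ_eq ht]
    field_simp [hG0 t ht]
    ring
  have hconst : exp (-F b) * G b = G a := by
    simpa [F] using constant_of_has_deriv_right_zero
      (fun t ht => (hH t ht).continuousAt.continuousWithinAt)
      (fun t ht => (hH t (Ico_subset_Icc_self ht)).hasDerivWithinAt) b (right_mem_Icc.2 hab)
  have hFb : F b = ∫ t in a..b, G' t / G t :=
    intervalIntegral.integral_congr (by rw [uIcc_of_le hab]; exact hφ_eq)
  rw [← hFb, ← hconst, ← mul_assoc, ← exp_add, add_neg_cancel, exp_zero, one_mul]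

theorem exp_int_mul_integral_div_mul_zpow {a b : ℝ} (hab : a ≤ b) {G G' : ℝ → ℂ}
    (hG : ∀ t ∈ Icc a b, HasDerivAt G (G' t) t) (hG' : ContinuousOn G' (Icc a b))
    (hG0 : ∀ t ∈ Icc a b, G t ≠ 0) (n : ℤ) :
    exp (n * ∫ t in a..b, G' t / G t) * G a ^ n = G b ^ n := by
  rw [exp_int_mul, ← mul_zpow, exp_integral_div_mul_eq hab hG hG' hG0]

theorem neg_one_zpow_eq_of_even_add {α : Type*} [DivisionRing α] {m n : ℤ} (h : Even (m + n)) :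
    (-1 : α) ^ m = (-1) ^ n := by
  simp only [neg_one_zpow_eq_ite, Int.even_add.1 h]

/-- Theorem 0.9 / Corollary 4.5: the Parshin symbol equals
`exp((2πi)⁻² · Log{f₁,f₂,f₃})` times `g₁(Q)^{D₁} g₂(Q)^{D₂} g₃(Q)^{D₃}`, where
`Gₖ(t) = gₖ(γ(t))` is the restriction of the unit part `gₖ` along the path `γ`
from the base point `Q = γ(0)` to the point `γ(1)` near `P`. -/
theorem parshin_eq_exp_log
    (m₁ m₂ m₃ n₁ n₂ n₃ : ℤ) (G₁ G₂ G₃ G₁' G₂' G₃' : ℝ → ℂ)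
    (hG₁d : ∀ t ∈ Set.Icc (0:ℝ) 1, HasDerivAt G₁ (G₁' t) t)
    (hG₂d : ∀ t ∈ Set.Icc (0:ℝ) 1, HasDerivAt G₂ (G₂' t) t)
    (hG₃d : ∀ t ∈ Set.Icc (0:ℝ) 1, HasDerivAt G₃ (G₃' t) t)
    (hG₁c : ContinuousOn G₁' (Set.Icc 0 1))
    (hG₂c : ContinuousOn G₂' (Set.Icc 0 1))
    (hG₃c : ContinuousOn G₃' (Set.Icc 0 1))
    (hG₁0 : ∀ t ∈ Set.Icc (0:ℝ) 1, G₁ t ≠ 0)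
    (hG₂0 : ∀ t ∈ Set.Icc (0:ℝ) 1, G₂ t ≠ 0)
    (hG₃0 : ∀ t ∈ Set.Icc (0:ℝ) 1, G₃ t ≠ 0) :
    Complex.exp ((2 * Real.pi * Complex.I) ^ (-2 : ℤ) *
        ((2 * Real.pi * Complex.I) ^ (2 : ℕ) *
          ((Real.pi : ℂ) * Complex.I *
              ((m₁*m₂*n₃ - m₁*n₂*m₃ + n₁*m₂*n₃ - n₁*n₂*m₃ + n₁*m₂*m₃ - m₁*n₂*n₃ : ℤ) : ℂ)
            + ((m₂*n₃ - m₃*n₂ : ℤ) : ℂ) * (∫ t in (0:ℝ)..1, G₁' t / G₁ t)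
            + ((m₃*n₁ - m₁*n₃ : ℤ) : ℂ) * (∫ t in (0:ℝ)..1, G₂' t / G₂ t)
            + ((m₁*n₂ - m₂*n₁ : ℤ) : ℂ) * (∫ t in (0:ℝ)..1, G₃' t / G₃ t))))
      * G₁ 0 ^ (m₂*n₃ - m₃*n₂) * G₂ 0 ^ (m₃*n₁ - m₁*n₃) * G₃ 0 ^ (m₁*n₂ - m₂*n₁)
    = (-1 : ℂ) ^ (n₁*n₂*m₃ + n₂*n₃*m₁ + n₃*n₁*m₂ - m₁*m₂*n₃ - m₂*m₃*n₁ - m₃*m₁*n₂)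
      * G₁ 1 ^ (m₂*n₃ - m₃*n₂) * G₂ 1 ^ (m₃*n₁ - m₁*n₃) * G₃ 1 ^ (m₁*n₂ - m₂*n₁) := by
  have h2pi : (2 * Real.pi * I : ℂ) ^ 2 ≠ 0 := by simp [Real.pi_ne_zero]
  have hsign : exp (Real.pi * I *
      ((m₁*m₂*n₃ - m₁*n₂*m₃ + n₁*m₂*n₃ - n₁*n₂*m₃ + n₁*m₂*m₃ - m₁*n₂*n₃ : ℤ) : ℂ))
      = (-1 : ℂ) ^ (n₁*n₂*m₃ + n₂*n₃*m₁ + n₃*n₁*m₂ - m₁*m₂*n₃ - m₂*m₃*n₁ - m₃*m₁*n₂) := by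
    rw [mul_comm, exp_int_mul, exp_pi_mul_I]
    exact neg_one_zpow_eq_of_even_add ⟨n₁*m₂*n₃ - m₁*n₂*m₃, by ring⟩
  rw [zpow_neg, zpow_ofNat, inv_mul_cancel_left₀ h2pi, exp_add, exp_add, exp_add, hsign,
    ← exp_int_mul_integral_div_mul_zpow zero_le_one hG₁d hG₁c hG₁0,
    ← exp_int_mul_integral_div_mul_zpow zero_le_one hG₂d hG₂c hG₂0,
    ← exp_int_mul_integral_div_mul_zpow zero_le_one hG₃d hG₃c hG₃0]
  ring
end

section
/- Let ε₀, ε₁ > 0, let m₁, n₁, m₂, n₂ be integers, and let g₁, g₂ : ℂ × ℂ → ℂ be holomorphic (complex differentiable) and nonvanishing on an open neighborhood of the closed polydisc {(x,y) : |x| ≤ ε₀, |y| ≤ ε₁}. Write ∂ₓ and ∂_y for the complex partial derivatives. Then the iterated circle integral ∮_{|x|=ε₀} ( ∮_{|y|=ε₁} [ (m₁/x + ∂ₓg₁(x,y)/g₁(x,y))·(n₂/y + ∂_y g₂(x,y)/g₂(x,y)) − (n₁/y + ∂_y g₁(x,y)/g₁(x,y))·(m₂/x + ∂ₓg₂(x,y)/g₂(x,y))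 ] dy ) dx = (2πi)²·(m₁n₂ − m₂n₁). -/
/-!
Expanding the integrand, the inner integral over `|y| = ε₁` keeps only the simple pole at
`y = 0` (Cauchy's theorem and formula), leaving
`2πi ((m₁n₂ − m₂n₁)/x + n₂ ∂ₓ log g₁(x,0) − n₁ ∂ₓ log g₂(x,0))`, whose integral over `|x| = ε₀`
is `(2πi)² (m₁n₂ − m₂n₁)` for the same reason. This needs `∂ₓ g(x, y)` to be holomorphic in `y`:
differentiate `∂ₓ g(x, y) = (2πi)⁻¹ ∮ g(z, y) / (z - x)² dz` under the integral sign, the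
`y`-derivatives of the integrand being bounded by Cauchy estimates.
-/

open Complex Metric Set MeasureTheory Topology

variable {E : Type*} [NormedAddCommGroup E] [NormedSpace ℂ E]

theorem continuousOn_cderiv_of_continuousOn_uncurry {F : ℂ → ℂ → E} {s : Set ℂ} {w : ℂ} {r : ℝ}
    (hr : 0 < r) (hF : ContinuousOn (Function.uncurry F) (s ×ˢ sphere w r)) :
    ContinuousOn (fun z => cderiv r (F z) w) s := by
  rw [continuousOn_iff_continuous_domRestrict]
  refine continuous_const.smul
    (intervalIntegral.continuous_parametric_intervalIntegral_of_continuous' ?_ _ _)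
  have hF' : Continuous fun p : s × ℝ => F p.1 (circleMap w r p.2) :=
    hF.comp_continuous (f := fun p : s × ℝ => ((p.1 : ℂ), circleMap w r p.2)) (by fun_prop)
      fun p => ⟨p.1.2, circleMap_mem_sphere w hr.le p.2⟩
  simp only [deriv_circleMap, circleMap_sub_center, Function.uncurry_def]
  exact (by fun_prop : Continuous fun p : s × ℝ => circleMap 0 r p.2 * I).smul
    (((((continuous_circleMap 0 r).comp continuous_snd).pow 2).inv₀
      fun p => pow_ne_zero _ (circleMap_ne_center hr.ne')).smul hF')

variable [CompleteSpace E]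

theorem differentiableAt_circleIntegral_of_differentiableOn {F : ℂ → ℂ → E} {c w₀ : ℂ}
    {R ρ : ℝ} (hR : 0 ≤ R) (hρ : 0 < ρ)
    (hF : ContinuousOn (Function.uncurry F) (sphere c R ×ˢ closedBall w₀ ρ))
    (hFd : ∀ z ∈ sphere c R, DifferentiableOn ℂ (F z) (ball w₀ ρ)) :
    DifferentiableAt ℂ (fun w => ∮ z in C(c, R), F z w) w₀ := by
  obtain ⟨M, hM⟩ :=
    ((isCompact_sphere c R).prod (isCompact_closedBall w₀ ρ)).exists_bound_of_continuousOn hF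
  have hρ2 : 0 < ρ / 2 := half_pos hρ
  have hsphere : ∀ w ∈ ball w₀ (ρ / 2), sphere w (ρ / 2) ⊆ closedBall w₀ ρ := fun w hw =>
    sphere_subset_closedBall.trans (closedBall_subset_closedBall' (by linarith [mem_ball.1 hw]))
  have hcball : ∀ w ∈ ball w₀ (ρ / 2), closedBall w (ρ / 2) ⊆ ball w₀ ρ := fun w hw =>
    closedBall_subset_ball' (by linarith [mem_ball.1 hw])
  have hcderiv : ∀ z ∈ sphere c R, ∀ w ∈ ball w₀ (ρ / 2),
      cderiv (ρ / 2) (F z) w = deriv (F z) w :=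
    fun z hz w hw => cderiv_eq_deriv isOpen_ball (hFd z hz) hρ2 (hcball w hw)
  have hz : ∀ θ, circleMap c R θ ∈ sphere c R := circleMap_mem_sphere c hR
  have hcircle : ∀ w ∈ closedBall w₀ ρ, CircleIntegrable (fun z => F z w) c R := fun w hw =>
    (hF.comp (continuousOn_id.prodMk continuousOn_const) fun z hz => ⟨hz, hw⟩).circleIntegrable hR
  have hderiv_circleMap : Continuous (deriv (circleMap c R)) := by
    rw [funext (deriv_circleMap c R)]; fun_prop
  -- The derivative is written as `cderiv` so that its measurability in `θ` comes from continuity.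
  refine (intervalIntegral.hasDerivAt_integral_of_dominated_loc_of_deriv_le
    (F' := fun w θ => deriv (circleMap c R) θ • cderiv (ρ / 2) (F (circleMap c R θ)) w)
    (bound := fun θ => ‖deriv (circleMap c R) θ‖ * (M / (ρ / 2)))
    (ball_mem_nhds w₀ hρ2) ?_ (hcircle w₀ (mem_closedBall_self hρ.le)).out ?_ ?_ ?_
    ?_).2.differentiableAt
  · filter_upwards [ball_mem_nhds w₀ hρ] with w hw
    rw [uIoc_of_le Real.two_pi_pos.le]
    exact (hcircle w (ball_subset_closedBall hw)).out.aestronglyMeasurable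
  · have hcont := continuousOn_cderiv_of_continuousOn_uncurry hρ2
      (hF.mono (prod_mono_right (hsphere w₀ (mem_ball_self hρ2))))
    exact (hderiv_circleMap.smul
      (hcont.comp_continuous (continuous_circleMap c R) hz)).aestronglyMeasurable
  · refine ae_of_all _ fun θ _ w hw => ?_
    rw [norm_smul]
    gcongr
    exact norm_cderiv_le hρ2 fun v hv => hM (circleMap c R θ, v) ⟨hz θ, hsphere w hw hv⟩
  · exact (hderiv_circleMap.norm.mul continuous_const).intervalIntegrable _ _
  · refine ae_of_all _ fun θ _ w hw => ?_
    rw [hcderiv _ (hz θ) w hw]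
    exact (((hFd _ (hz θ)).differentiableAt
      (isOpen_ball.mem_nhds (hcball w hw (mem_closedBall_self hρ2.le)))).hasDerivAt).const_smul _

theorem differentiableAt_snd_deriv_fst {g : ℂ × ℂ → E} {U : Set (ℂ × ℂ)} {x y : ℂ}
    (hg : DifferentiableOn ℂ g U) (hU : IsOpen U) (hxy : (x, y) ∈ U) :
    DifferentiableAt ℂ (fun w => deriv (fun z => g (z, w)) x) y := by
  obtain ⟨r, hr, hrU⟩ := nhds_basis_closedBall.mem_iff.1 (hU.mem_nhds hxy)
  rw [← closedBall_prod_same] at hrU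
  have hgc : ContinuousOn g (closedBall x r ×ˢ closedBall y r) := hg.continuousOn.mono hrU
  have hslice : ∀ w ∈ closedBall y r, DifferentiableOn ℂ (fun z => g (z, w)) (closedBall x r) :=
    fun w hw => hg.comp (differentiableOn_id.prodMk (differentiableOn_const w))
      fun z hz => hrU ⟨hz, hw⟩
  have hcauchy : (fun w => deriv (fun z => g (z, w)) x) =ᶠ[𝓝 y]
      fun w => (2 * Real.pi * I)⁻¹ • ∮ z in C(x, r), (1 / (z - x) ^ 2) • g (z, w) := by
    filter_upwards [ball_mem_nhds y hr] with w hw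
    rw [(hslice w (ball_subset_closedBall hw)).deriv_eq_smul_circleIntegral hr, inv_smul_smul₀]
    exact two_pi_I_ne_zero
  refine (DifferentiableAt.const_smul ?_ _).congr_of_eventuallyEq hcauchy
  refine differentiableAt_circleIntegral_of_differentiableOn hr.le hr ?_ fun z hz => ?_
  · show ContinuousOn (fun p : ℂ × ℂ => (1 / (p.1 - x) ^ 2) • g p) _
    refine ContinuousOn.smul ?_ (hgc.mono (prod_mono_left sphere_subset_closedBall))
    exact continuousOn_const.div (by fun_prop) fun p hp =>
      pow_ne_zero 2 (sub_ne_zero.2 (ne_of_mem_sphere hp.1 hr.ne'))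
  · exact (hg.comp ((differentiableOn_const z).prodMk differentiableOn_id) fun w hw =>
      hrU ⟨sphere_subset_closedBall hz, ball_subset_closedBall hw⟩).const_smul _

theorem differentiableAt_logDeriv_of_differentiableOn {f : ℂ → ℂ} {s : Set ℂ} {z : ℂ}
    (hf : DifferentiableOn ℂ f s) (hs : IsOpen s) (hz : z ∈ s) (hf0 : f z ≠ 0) :
    DifferentiableAt ℂ (logDeriv f) z :=
  ((hf.deriv hs).differentiableAt (hs.mem_nhds hz)).div (hf.differentiableAt (hs.mem_nhds hz)) hf0

section LogDeriv

variable {g : ℂ × ℂ → ℂ} {U : Set (ℂ × ℂ)} {x y : ℂ}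

theorem differentiableAt_logDeriv_fst (hg : DifferentiableOn ℂ g U) (hU : IsOpen U)
    (hg0 : ∀ p ∈ U, g p ≠ 0) (hxy : (x, y) ∈ U) :
    DifferentiableAt ℂ (logDeriv fun z => g (z, y)) x :=
  differentiableAt_logDeriv_of_differentiableOn (s := (fun z => (z, y)) ⁻¹' U)
    (hg.comp (by fun_prop) (mapsTo_preimage _ _)) (hU.preimage (by fun_prop)) hxy (hg0 _ hxy)

theorem differentiableAt_logDeriv_snd (hg : DifferentiableOn ℂ g U) (hU : IsOpen U)
    (hg0 : ∀ p ∈ U, g p ≠ 0) (hxy : (x, y) ∈ U) :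
    DifferentiableAt ℂ (logDeriv fun w => g (x, w)) y :=
  differentiableAt_logDeriv_of_differentiableOn (s := (fun w => (x, w)) ⁻¹' U)
    (hg.comp (by fun_prop) (mapsTo_preimage _ _)) (hU.preimage (by fun_prop)) hxy (hg0 _ hxy)

theorem differentiableAt_snd_logDeriv_fst (hg : DifferentiableOn ℂ g U) (hU : IsOpen U)
    (hg0 : ∀ p ∈ U, g p ≠ 0) (hxy : (x, y) ∈ U) :
    DifferentiableAt ℂ (fun w => logDeriv (fun z => g (z, w)) x) y :=
  (differentiableAt_snd_deriv_fst hg hU hxy).div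
    ((hg.differentiableAt (hU.mem_nhds hxy)).comp y (by fun_prop)) (hg0 _ hxy)

end LogDeriv

theorem circleIntegral_sub_inv_smul_add {φ ψ : ℂ → E} {c : ℂ} {R : ℝ} (hR : 0 < R)
    (hφ : DifferentiableOn ℂ φ (closedBall c R)) (hψ : DifferentiableOn ℂ ψ (closedBall c R)) :
    (∮ z in C(c, R), ((z - c)⁻¹ • φ z + ψ z)) = (2 * Real.pi * I : ℂ) • φ c := by
  have hinv : ContinuousOn (fun z => (z - c)⁻¹) (sphere c R) :=
    (continuousOn_id.sub continuousOn_const).inv₀ fun z hz =>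
      sub_ne_zero.2 (ne_of_mem_sphere hz hR.ne')
  rw [circleIntegral.integral_add (f := fun z => (z - c)⁻¹ • φ z)
      ((hinv.smul (hφ.continuousOn.mono sphere_subset_closedBall)).circleIntegrable hR.le)
      ((hψ.continuousOn.mono sphere_subset_closedBall).circleIntegrable hR.le),
    hφ.circleIntegral_sub_inv_smul (mem_ball_self hR),
    (hψ.mono closure_ball_subset_closedBall).diffContOnCl.circleIntegral_eq_zero hR.le, add_zero]

theorem circleIntegral_wedge_eq {R : ℝ} (hR : 0 < R) {a₁ a₂ b₁ b₂ : ℂ → ℂ} (α₁ α₂ β₁ β₂ : ℂ)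
    (ha₁ : DifferentiableOn ℂ a₁ (closedBall 0 R)) (ha₂ : DifferentiableOn ℂ a₂ (closedBall 0 R))
    (hb₁ : DifferentiableOn ℂ b₁ (closedBall 0 R)) (hb₂ : DifferentiableOn ℂ b₂ (closedBall 0 R)) :
    (∮ y in C(0, R), ((α₁ + a₁ y) * (β₂ / y + b₂ y) - (β₁ / y + b₁ y) * (α₂ + a₂ y)))
      = 2 * Real.pi * I * (α₁ * β₂ - α₂ * β₁ + β₂ * a₁ 0 - β₁ * a₂ 0) := by
  have key := circleIntegral_sub_inv_smul_add hR
    (φ := fun y => α₁ * β₂ - α₂ * β₁ + β₂ * a₁ y - β₁ * a₂ y)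
    (ψ := fun y => (α₁ + a₁ y) * b₂ y - b₁ y * (α₂ + a₂ y))
    (by fun_prop) (by fun_prop)
  simp only [sub_zero, smul_eq_mul] at key
  rw [← key]
  congr 1
  funext y
  ring

/-- Lemma 3.2(a): for `fₖ(x,y) = x^{mₖ} y^{nₖ} gₖ(x,y)` with `gₖ` holomorphic
and nonvanishing near the closed polydisc, the integral of `df₁/f₁ ∧ df₂/f₂`
over the torus `{|x| = ε₀, |y| = ε₁}` equals `(2πi)²(m₁n₂ − m₂n₁)`. -/
theorem torus_integral_wedge_logDeriv
    (ε₀ ε₁ : ℝ) (hε₀ : 0 < ε₀) (hε₁ : 0 < ε₁)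
    (m₁ n₁ m₂ n₂ : ℤ) (g₁ g₂ : ℂ × ℂ → ℂ) (U : Set (ℂ × ℂ)) (hU : IsOpen U)
    (hsub : {p : ℂ × ℂ | ‖p.1‖ ≤ ε₀ ∧ ‖p.2‖ ≤ ε₁} ⊆ U)
    (hg₁ : DifferentiableOn ℂ g₁ U) (hg₂ : DifferentiableOn ℂ g₂ U)
    (hg₁0 : ∀ p ∈ U, g₁ p ≠ 0) (hg₂0 : ∀ p ∈ U, g₂ p ≠ 0) :
    (∮ x in C(0, ε₀), (∮ y in C(0, ε₁),
        (((m₁ : ℂ) / x + deriv (fun z => g₁ (z, y)) x / g₁ (x, y))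
            * ((n₂ : ℂ) / y + deriv (fun z => g₂ (x, z)) y / g₂ (x, y))
          - ((n₁ : ℂ) / y + deriv (fun z => g₁ (x, z)) y / g₁ (x, y))
            * ((m₂ : ℂ) / x + deriv (fun z => g₂ (z, y)) x / g₂ (x, y)))))
      = (2 * Real.pi * Complex.I) ^ (2 : ℕ) * ((m₁ * n₂ - m₂ * n₁ : ℤ) : ℂ) := by
  have hmem : ∀ x ∈ closedBall (0 : ℂ) ε₀, ∀ y ∈ closedBall (0 : ℂ) ε₁, (x, y) ∈ U :=
    fun x hx y hy => hsub ⟨mem_closedBall_zero_iff.1 hx, mem_closedBall_zero_iff.1 hy⟩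
  set η : ℂ → ℂ := fun x =>
    n₂ * logDeriv (fun z => g₁ (z, 0)) x - n₁ * logDeriv (fun z => g₂ (z, 0)) x
  have hη : DifferentiableOn ℂ η (closedBall 0 ε₀) := fun x hx =>
    have hx0 := hmem x hx 0 (mem_closedBall_self hε₁.le)
    (((differentiableAt_logDeriv_fst hg₁ hU hg₁0 hx0).const_mul _).sub
      ((differentiableAt_logDeriv_fst hg₂ hU hg₂0 hx0).const_mul _)).differentiableWithinAt
  calc _ = ∮ x in C(0, ε₀),
          2 * Real.pi * I * ((x - 0)⁻¹ • ((m₁ * n₂ - m₂ * n₁ : ℤ) : ℂ) + η x) :=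
        circleIntegral.integral_congr hε₀.le fun x hx => ?_
    _ = _ := by
      rw [circleIntegral.integral_const_mul,
        circleIntegral_sub_inv_smul_add hε₀ (differentiableOn_const _) hη, smul_eq_mul]
      ring
  have hx := hmem x (sphere_subset_closedBall hx)
  refine (circleIntegral_wedge_eq hε₁ (a₁ := fun y => logDeriv (fun z => g₁ (z, y)) x)
    (a₂ := fun y => logDeriv (fun z => g₂ (z, y)) x) (b₁ := logDeriv fun y => g₁ (x, y))
    (b₂ := logDeriv fun y => g₂ (x, y)) _ _ _ _
    (fun y hy => (differentiableAt_snd_logDeriv_fst hg₁ hU hg₁0 (hx y hy)).differentiableWithinAt)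
    (fun y hy => (differentiableAt_snd_logDeriv_fst hg₂ hU hg₂0 (hx y hy)).differentiableWithinAt)
    (fun y hy => (differentiableAt_logDeriv_snd hg₁ hU hg₁0 (hx y hy)).differentiableWithinAt)
    (fun y hy => (differentiableAt_logDeriv_snd hg₂ hU hg₂0 (hx y hy)).differentiableWithinAt)
    ).trans ?_
  simp only [η, smul_eq_mul, sub_zero]
  push_cast
  ring
end

section
/- Let p₁, p₂, p₃, c₁, c₂, c₃ : ℝ → ℂ be continuous on [0,1] with ∫_0^1 cₖ(t) dt = 0 for k = 1,2,3. For each k define hₖ : ℝ → ℂ on [0,3] by hₖ(t) = pₖ(t) for t ∈ [0,1], hₖ(t) = cₖ(t−1) for t ∈ (1,2], hₖ(t) = −pₖ(3−t) for t ∈ (2,3]. Then ∫_{0 ≤ t₁ ≤ t₂ ≤ t₃ ≤ 3} h₁(t₁)h₂(t₂)h₃(t₃) dt₁dt₂dt₃ = ∫_{0 ≤ t₁ ≤ t₂ ≤ t₃ ≤ 1} c₁(t₁)c₂(t₂)c₃(t₃) + (∫_0^1 p₁)·(∫_{0 ≤ s ≤ t ≤ 1} c₂(s)c₃(t)) − (∫_{0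 ≤ s ≤ t ≤ 1} c₁(s)c₂(t))·(∫_0^1 p₃). -/
/-!
Integrate one running primitive at a time: the triple integral is
`∫₀³ (∫₀ᵗ (∫₀ˢ h₁) h₂) h₃`. On the loop the running primitives start from their values at the
end of `π`, and the value `∫_π ω₁` carried in gives the middle term. On the return leg `π⁻¹`
each running primitive retraces the one along `π`, shifted by what was accumulated on the loop.
Because `∫ c₁ = 0` the first primitive retraces exactly, so the double-integral integrand is
again a pullback along a conjugated loop; the second one is shifted by `∫_{[μ,τ]} ω₁∘ω₂`, which
gives the last term, and the remaining contributions of `π` and `π⁻¹` cancel.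
-/

open MeasureTheory Set intervalIntegral

section Continuity

variable {E : Type*} [NormedAddCommGroup E] {f : ℝ → E} {a b x y : ℝ}

theorem ContinuousOn.intervalIntegrable_of_mem_Icc (hf : ContinuousOn f (Icc a b))
    (hx : x ∈ Icc a b) (hy : y ∈ Icc a b) : IntervalIntegrable f volume x y :=
  (hf.mono (uIcc_subset_Icc hx hy)).intervalIntegrable

theorem ContinuousOn.continuousOn_primitive_Icc [NormedSpace ℝ E] (hf : ContinuousOn f (Icc a b))
    (hab : a ≤ b) : ContinuousOn (fun x => ∫ t in a..x, f t) (Icc a b) := by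
  have hint : IntegrableOn f (uIcc a b) volume := by
    simpa only [uIcc_of_le hab] using hf.integrableOn_Icc
  simpa only [uIcc_of_le hab] using continuousOn_primitive_interval hint

end Continuity

theorem intervalIntegral.integral_const_add_mul {f g : ℝ → ℂ} {a b : ℝ} (K : ℂ)
    (hg : IntervalIntegrable g volume a b)
    (hfg : IntervalIntegrable (fun x => f x * g x) volume a b) :
    ∫ x in a..b, (K + f x) * g x = K * (∫ x in a..b, g x) + ∫ x in a..b, f x * g x := by
  simp only [add_mul]
  rw [integral_add (hg.const_mul K) hfg, integral_const_mul]

section Congr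

variable {E : Type*} [NormedAddCommGroup E] {f g : ℝ → E} {a b : ℝ}

theorem intervalIntegral.integral_congr_Ioc [NormedSpace ℝ E] (hab : a ≤ b)
    (h : EqOn f g (Ioc a b)) : ∫ x in a..b, f x = ∫ x in a..b, g x :=
  integral_congr_Ioo_of_le hab (h.mono Ioo_subset_Ioc_self)

theorem IntervalIntegrable.congr_Ioc (hab : a ≤ b) (hg : IntervalIntegrable g volume a b)
    (h : EqOn f g (Ioc a b)) : IntervalIntegrable f volume a b :=
  (intervalIntegrable_congr (by rwa [uIoc_of_le hab])).mpr hg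

end Congr

theorem intervalIntegral.integral_primitive_const_add_mul {f g k : ℝ → ℂ} {a b : ℝ}
    (hab : a ≤ b) (K : ℂ) (hf : ContinuousOn f (Icc a b)) (hg : ContinuousOn g (Icc a b))
    (hk : ContinuousOn k (Icc a b)) :
    ∫ u in a..b, (∫ s in a..u, (K + ∫ v in a..s, f v) * g s) * k u
      = K * (∫ u in a..b, (∫ s in a..u, g s) * k u)
        + ∫ u in a..b, (∫ s in a..u, (∫ v in a..s, f v) * g s) * k u := by
  have hF := hf.continuousOn_primitive_Icc hab
  have hG := hg.continuousOn_primitive_Icc hab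
  have hFG := (hF.mul hg).continuousOn_primitive_Icc hab
  have hinner : ∀ u ∈ uIcc a b, ∫ s in a..u, (K + ∫ v in a..s, f v) * g s
      = K * (∫ s in a..u, g s) + ∫ s in a..u, (∫ v in a..s, f v) * g s := fun u hu => by
    rw [uIcc_of_le hab] at hu
    exact integral_const_add_mul K (hg.intervalIntegrable_of_mem_Icc ⟨le_rfl, hab⟩ hu)
      ((hF.mul hg).intervalIntegrable_of_mem_Icc ⟨le_rfl, hab⟩ hu)
  have hGk : IntervalIntegrable (fun u => (∫ s in a..u, g s) * k u) volume a b :=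
    (hG.mul hk).intervalIntegrable_of_Icc hab
  have hFGk : IntervalIntegrable (fun u => (∫ s in a..u, (∫ v in a..s, f v) * g s) * k u)
      volume a b := (hFG.mul hk).intervalIntegrable_of_Icc hab
  rw [integral_congr fun u hu => by rw [hinner u hu]]
  simp only [add_mul, mul_assoc]
  rw [integral_add (hGk.const_mul K) hFGk, integral_const_mul]

/-- `φ` is the pullback of a 1-form along the path `π₁ · π₂ · π₃⁻¹` traversed on `[0,3]`, where
`α`, `β`, `γ` are its pullbacks along `π₁`, `π₂`, `π₃` on `[0,1]`. -/
def IsConcatPullback (φ α β γ : ℝ → ℂ) : Prop :=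
  (∀ t ∈ Icc (0:ℝ) 1, φ t = α t) ∧ (∀ t ∈ Ioc (1:ℝ) 2, φ t = β (t - 1)) ∧
    ∀ t ∈ Ioc (2:ℝ) 3, φ t = -γ (3 - t)

namespace IsConcatPullback

variable {φ α β γ h a b : ℝ → ℂ}

theorem intervalIntegrable_zero_one (hφ : IsConcatPullback φ α β γ)
    (hα : ContinuousOn α (Icc 0 1)) : IntervalIntegrable φ volume 0 1 :=
  (hα.intervalIntegrable_of_Icc zero_le_one).congr_Ioc zero_le_one
    fun t ht => hφ.1 t (Ioc_subset_Icc_self ht)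

theorem intervalIntegrable_one_two (hφ : IsConcatPullback φ α β γ)
    (hβ : ContinuousOn β (Icc 0 1)) : IntervalIntegrable φ volume 1 2 := by
  have hβ' : IntervalIntegrable (fun t => β (t - 1)) volume 1 2 := by
    convert (hβ.intervalIntegrable_of_Icc zero_le_one).comp_sub_right 1 using 1 <;> norm_num
  exact hβ'.congr_Ioc one_le_two hφ.2.1

theorem intervalIntegrable_two_three (hφ : IsConcatPullback φ α β γ)
    (hγ : ContinuousOn γ (Icc 0 1)) : IntervalIntegrable φ volume 2 3 := by
  have hγ' : IntervalIntegrable (fun t => -γ (3 - t)) volume 2 3 := by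
    convert ((hγ.intervalIntegrable_of_Icc zero_le_one).comp_sub_left 3).symm.neg using 1 <;>
      norm_num [Pi.neg_def]
  exact hγ'.congr_Ioc (by norm_num) hφ.2.2

theorem primitive_eq_of_mem_Icc_zero_one (hφ : IsConcatPullback φ α β γ) {t : ℝ}
    (ht : t ∈ Icc (0:ℝ) 1) : ∫ s in 0..t, φ s = ∫ s in 0..t, α s :=
  integral_congr fun s hs => hφ.1 s (uIcc_subset_Icc ⟨le_rfl, zero_le_one⟩ ht hs)

theorem primitive_eq_of_mem_Icc_one_two (hφ : IsConcatPullback φ α β γ)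
    (hα : ContinuousOn α (Icc 0 1)) (hβ : ContinuousOn β (Icc 0 1)) {t : ℝ}
    (ht : t ∈ Icc (1:ℝ) 2) :
    ∫ s in 0..t, φ s = (∫ s in 0..1, α s) + ∫ s in 0..t - 1, β s := by
  have hint : IntervalIntegrable φ volume 1 t :=
    (hφ.intervalIntegrable_one_two hβ).mono_set (uIcc_subset_uIcc_left (Icc_subset_uIcc ht))
  rw [← integral_add_adjacent_intervals (hφ.intervalIntegrable_zero_one hα) hint,
    hφ.primitive_eq_of_mem_Icc_zero_one ⟨zero_le_one, le_rfl⟩,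
    integral_congr_Ioc ht.1 fun s hs => hφ.2.1 s ⟨hs.1, hs.2.trans ht.2⟩,
    integral_comp_sub_right, sub_self]

theorem primitive_eq_of_mem_Icc_two_three (hφ : IsConcatPullback φ α β γ)
    (hα : ContinuousOn α (Icc 0 1)) (hβ : ContinuousOn β (Icc 0 1))
    (hγ : ContinuousOn γ (Icc 0 1)) {t : ℝ} (ht : t ∈ Icc (2:ℝ) 3) :
    ∫ s in 0..t, φ s = (∫ s in 0..1, α s) + (∫ s in 0..1, β s) - ∫ s in 3 - t..1, γ s := by
  have hint : IntervalIntegrable φ volume 2 t :=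
    (hφ.intervalIntegrable_two_three hγ).mono_set (uIcc_subset_uIcc_left (Icc_subset_uIcc ht))
  rw [← integral_add_adjacent_intervals
      ((hφ.intervalIntegrable_zero_one hα).trans (hφ.intervalIntegrable_one_two hβ)) hint,
    hφ.primitive_eq_of_mem_Icc_one_two hα hβ ⟨one_le_two, le_rfl⟩,
    integral_congr_Ioc ht.1 fun s hs => hφ.2.2 s ⟨hs.1, hs.2.trans ht.2⟩,
    intervalIntegral.integral_neg, integral_comp_sub_left]
  norm_num [sub_eq_add_neg]

theorem integral_zero_three (hφ : IsConcatPullback φ α β γ)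
    (hα : ContinuousOn α (Icc 0 1)) (hβ : ContinuousOn β (Icc 0 1))
    (hγ : ContinuousOn γ (Icc 0 1)) :
    ∫ s in 0..3, φ s = (∫ s in 0..1, α s) + (∫ s in 0..1, β s) - ∫ s in 0..1, γ s := by
  simpa using hφ.primitive_eq_of_mem_Icc_two_three hα hβ hγ ⟨by norm_num, le_rfl⟩

theorem mul_primitive (hφ : IsConcatPullback φ α β α) (hh : IsConcatPullback h a b a)
    (hα : ContinuousOn α (Icc 0 1)) (hβ : ContinuousOn β (Icc 0 1)) :
    IsConcatPullback (fun t => (∫ s in 0..t, φ s) * h t) (fun u => (∫ s in 0..u, α s) * a u)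
      (fun u => ((∫ s in 0..1, α s) + ∫ s in 0..u, β s) * b u)
      (fun u => ((∫ s in 0..1, β s) + ∫ s in 0..u, α s) * a u) := by
  refine ⟨fun t ht => ?_, fun t ht => ?_, fun t ht => ?_⟩ <;> dsimp only
  · rw [hφ.primitive_eq_of_mem_Icc_zero_one ht, hh.1 t ht]
  · rw [hφ.primitive_eq_of_mem_Icc_one_two hα hβ (Ioc_subset_Icc_self ht), hh.2.1 t ht]
  · have ht' : 3 - t ∈ Icc (0:ℝ) 1 := ⟨by linarith [ht.2], by linarith [ht.1]⟩
    rw [hφ.primitive_eq_of_mem_Icc_two_three hα hβ hα (Ioc_subset_Icc_self ht), hh.2.2 t ht,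
      ← integral_add_adjacent_intervals
        (hα.intervalIntegrable_of_mem_Icc ⟨le_rfl, zero_le_one⟩ ht')
        (hα.intervalIntegrable_of_mem_Icc ht' ⟨zero_le_one, le_rfl⟩)]
    ring

theorem mul_primitive_of_integral_eq_zero (hφ : IsConcatPullback φ α β α)
    (hh : IsConcatPullback h a b a) (hα : ContinuousOn α (Icc 0 1))
    (hβ : ContinuousOn β (Icc 0 1)) (hβ₀ : ∫ s in 0..1, β s = 0) :
    IsConcatPullback (fun t => (∫ s in 0..t, φ s) * h t) (fun u => (∫ s in 0..u, α s) * a u)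
      (fun u => ((∫ s in 0..1, α s) + ∫ s in 0..u, β s) * b u)
      (fun u => (∫ s in 0..u, α s) * a u) := by
  simpa only [hβ₀, zero_add] using hφ.mul_primitive hh hα hβ

theorem integral_mul_primitive (hφ : IsConcatPullback φ α β α) (hh : IsConcatPullback h a b a)
    (hα : ContinuousOn α (Icc 0 1)) (hβ : ContinuousOn β (Icc 0 1))
    (ha : ContinuousOn a (Icc 0 1)) (hb : ContinuousOn b (Icc 0 1)) :
    ∫ t in 0..3, (∫ s in 0..t, φ s) * h t
      = (∫ u in 0..1, (∫ s in 0..u, β s) * b u)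
        + (∫ s in 0..1, α s) * (∫ u in 0..1, b u) - (∫ s in 0..1, β s) * ∫ u in 0..1, a u := by
  have hA := hα.continuousOn_primitive_Icc zero_le_one
  have hB := hβ.continuousOn_primitive_Icc zero_le_one
  rw [(hφ.mul_primitive hh hα hβ).integral_zero_three (hA.mul ha)
      ((continuousOn_const.add hB).mul hb) ((continuousOn_const.add hA).mul ha),
    integral_const_add_mul _ (hb.intervalIntegrable_of_Icc zero_le_one)
      ((hB.mul hb).intervalIntegrable_of_Icc zero_le_one),
    integral_const_add_mul _ (ha.intervalIntegrable_of_Icc zero_le_one)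
      ((hA.mul ha).intervalIntegrable_of_Icc zero_le_one)]
  ring

end IsConcatPullback

/-- Lemma 2.25: for the conjugated loop `π·[μ,τ]·π⁻¹`, the triple iterated
integral equals `∫_{[μ,τ]} ω₁∘ω₂∘ω₃ + ∫_π ω₁ ∫_{[μ,τ]} ω₂∘ω₃ +
∫_{[μ,τ]} ω₁∘ω₂ ∫_{π⁻¹} ω₃`.  Here `p k` is the pullback of `ωₖ` along the
path `π`, `c k` the pullback along the commutator loop `[μ,τ]` (so that
`∫_0^1 c k = 0`), and `h k` the pullback along `π·[μ,τ]·π⁻¹`, given piecewise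
on `[0,3]`. -/
theorem triple_iterated_integral_over_conjugated_loop
    (p c h : Fin 3 → ℝ → ℂ)
    (hp : ∀ k, ContinuousOn (p k) (Set.Icc 0 1))
    (hc : ∀ k, ContinuousOn (c k) (Set.Icc 0 1))
    (hc0 : ∀ k, (∫ t in (0:ℝ)..1, c k t) = 0)
    (h1 : ∀ k, ∀ t ∈ Set.Icc (0:ℝ) 1, h k t = p k t)
    (h2 : ∀ k, ∀ t ∈ Set.Ioc (1:ℝ) 2, h k t = c k (t - 1))
    (h3 : ∀ k, ∀ t ∈ Set.Ioc (2:ℝ) 3, h k t = -p k (3 - t)) :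
    (∫ t₃ in (0:ℝ)..3, ∫ t₂ in (0:ℝ)..t₃, ∫ t₁ in (0:ℝ)..t₂, h 0 t₁ * h 1 t₂ * h 2 t₃)
      = (∫ t₃ in (0:ℝ)..1, ∫ t₂ in (0:ℝ)..t₃, ∫ t₁ in (0:ℝ)..t₂, c 0 t₁ * c 1 t₂ * c 2 t₃)
        + (∫ t in (0:ℝ)..1, p 0 t) * (∫ t in (0:ℝ)..1, ∫ s in (0:ℝ)..t, c 1 s * c 2 t)
        - (∫ t in (0:ℝ)..1, ∫ s in (0:ℝ)..t, c 0 s * c 1 t) * (∫ t in (0:ℝ)..1, p 2 t) := by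
  have hpull : ∀ k, IsConcatPullback (h k) (p k) (c k) (p k) := fun k => ⟨h1 k, h2 k, h3 k⟩
  have hC₀ := (hc 0).continuousOn_primitive_Icc zero_le_one
  have hφ₂ := (hpull 0).mul_primitive_of_integral_eq_zero (hpull 1) (hp 0) (hc 0) (hc0 0)
  simp only [intervalIntegral.integral_mul_const]
  rw [hφ₂.integral_mul_primitive (hpull 2)
      (((hp 0).continuousOn_primitive_Icc zero_le_one).mul (hp 1))
      ((continuousOn_const.add hC₀).mul (hc 1)) (hp 2) (hc 2),
    integral_primitive_const_add_mul zero_le_one _ (hc 0) (hc 1) (hc 2),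
    integral_const_add_mul _ ((hc 1).intervalIntegrable_of_Icc zero_le_one)
      ((hC₀.mul (hc 1)).intervalIntegrable_of_Icc zero_le_one), hc0 1, hc0 2]
  ring
end
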